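/- arXiv:1504.05905 — 7 statements merged into one kernel-verified Lean document; each statement's English description precedes it below -/
import Mathlib

section
/- Let G be a graph, h ≥ 4 an integer, and v a vertex of G such that G − v is an induced path p₁p₂⋯p_h and v is adjacent to both p₁ and p_h in G. Then G contains an induced subgraph isomorphic to the house, the gem, the domino, or an induced cycle of length at least 5. -/
open scoped Classical

set_option maxRecDepth 8000

namespace LRW1

/-- The GF(2)-rank of the adjacency submatrix between `S` and its complement. -/
noncomputable def cutRank {V : Type} [Fintype V] (G : SimpleGraph V) (S : Set V) : ℕ :=
  Matrix.rank (Matrix.of fun (i : ↥S) (j : ↥(Sᶜ)) => if G.Adj i.1 j.1 then (1 : ZMod 2) else 0)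

/-- `G` has linear rankwidth at most `k`: some linear ordering of the vertices in which
every prefix has cut-rank at most `k`. -/
def LinRankwidthLE {V : Type} [Fintype V] (G : SimpleGraph V) (k : ℕ) : Prop :=
  ∃ σ : V ≃ Fin (Fintype.card V), ∀ i : ℕ, cutRank G {v : V | (σ v : ℕ) < i} ≤ k

/-- `B` is (the vertex set of) a thread block of `G` with first vertex `x` and last vertex `y`:
there is an ordering `σ` of `B` and a labeling (encoded by the predicates `lL`, `lR`,
"L ∈ ℓ(v)" and "R ∈ ℓ(v)") such that the first vertex is labelled `{R}`, the last `{L}`,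
and for `v <_σ w`, `vw` is an edge iff `R ∈ ℓ(v)` and `L ∈ ℓ(w)`. -/
def IsThreadBlock {V : Type} (G : SimpleGraph V) (B : Finset V) (x y : V) : Prop :=
  2 ≤ B.card ∧ x ∈ B ∧ y ∈ B ∧
  ∃ (σ : ↥B ≃ Fin B.card) (lL lR : V → Prop),
    (∀ v : ↥B, lL v.1 ∨ lR v.1) ∧
    (∀ hx : x ∈ B, (σ ⟨x, hx⟩ : ℕ) = 0) ∧ lR x ∧ ¬ lL x ∧
    (∀ hy : y ∈ B, (σ ⟨y, hy⟩ : ℕ) = B.card - 1) ∧ lL y ∧ ¬ lR y ∧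
    (∀ v w : ↥B, (σ v : ℕ) < (σ w : ℕ) → (G.Adj v.1 w.1 ↔ (lR v.1 ∧ lL w.1)))

/-- `G = P ⊙ 𝓑` for the directed path `P = v 0, v 1, …, v n` with `n` thread blocks `B i`
(for the arc from `v i` to `v (i+1)`), forming a mergeable family whose union is `G`. -/
def IsThreadDecomp {V : Type} (G : SimpleGraph V) (n : ℕ)
    (v : Fin (n+1) → V) (B : Fin n → Finset V) : Prop :=
  Function.Injective v ∧
  (∀ i : Fin n, IsThreadBlock G (B i) (v i.castSucc) (v i.succ)) ∧
  (∀ i j : Fin n, i ≠ j →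
    ((B i : Set V) ∩ (B j : Set V)) =
      (({v i.castSucc, v i.succ} : Set V) ∩ ({v j.castSucc, v j.succ} : Set V))) ∧
  (∀ a : V, ∃ i : Fin n, a ∈ B i) ∧
  (∀ a b : V, G.Adj a b → ∃ i : Fin n, a ∈ B i ∧ b ∈ B i)

/-- A (connected) thread graph: a single vertex, or `P ⊙ 𝓑` for a directed path `P`. -/
def IsThreadGraph {V : Type} [Fintype V] (G : SimpleGraph V) : Prop :=
  G.Connected ∧ (Fintype.card V ≤ 1 ∨
    ∃ (n : ℕ) (v : Fin (n+1) → V) (B : Fin n → Finset V), 1 ≤ n ∧ IsThreadDecomp G n v B)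

/-- Cyclic successor on `Fin h`. -/
def cycSucc {h : ℕ} (i : Fin h) : Fin h := ⟨(i.1 + 1) % h, Nat.mod_lt _ i.pos⟩

/-- `G = C ⊙ 𝓑` for the directed cycle `C` on `v 0, …, v (h-1)` with thread blocks `B i`
for the arcs `v i → v (i+1 mod h)`, forming a mergeable family whose union is `G`. -/
def IsNecklaceDecomp {V : Type} (G : SimpleGraph V) (h : ℕ)
    (v : Fin h → V) (B : Fin h → Finset V) : Prop :=
  3 ≤ h ∧ Function.Injective v ∧
  (∀ i : Fin h, IsThreadBlock G (B i) (v i) (v (cycSucc i))) ∧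
  (∀ i j : Fin h, i ≠ j →
    ((B i : Set V) ∩ (B j : Set V)) =
      (({v i, v (cycSucc i)} : Set V) ∩ ({v j, v (cycSucc j)} : Set V))) ∧
  (∀ a : V, ∃ i : Fin h, a ∈ B i) ∧
  (∀ a b : V, G.Adj a b → ∃ i : Fin h, a ∈ B i ∧ b ∈ B i)

/-- The house: a 4-cycle 1-2-3-4 plus a vertex 0 adjacent to the consecutive vertices 1, 2. -/
def house : SimpleGraph (Fin 5) :=
  SimpleGraph.fromRel (fun a b =>
    ((a,b) : Fin 5 × Fin 5) ∈ [((0:Fin 5),(1:Fin 5)),(0,2),(1,2),(2,3),(3,4),(4,1)])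

/-- The gem: a path 1-2-3-4 plus a vertex 0 adjacent to all four. -/
def gem : SimpleGraph (Fin 5) :=
  SimpleGraph.fromRel (fun a b =>
    ((a,b) : Fin 5 × Fin 5) ∈ [((0:Fin 5),(1:Fin 5)),(0,2),(0,3),(0,4),(1,2),(2,3),(3,4)])

/-- The domino: a 6-cycle 0-1-2-3-4-5 plus the chord 1-4 (two 4-cycles sharing an edge). -/
def domino : SimpleGraph (Fin 6) :=
  SimpleGraph.fromRel (fun a b =>
    ((a,b) : Fin 6 × Fin 6) ∈ [((0:Fin 6),(1:Fin 6)),(1,2),(2,3),(3,4),(4,5),(5,0),(1,4)])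


lemma cycAdj' {n : ℕ} (hn : 2 ≤ n) (i j : Fin n) :
    (SimpleGraph.cycleGraph n).Adj i j ↔
      (i.val + 1 = j.val ∨ j.val + 1 = i.val ∨
       (i.val + 1 = n ∧ j.val = 0) ∨ (j.val + 1 = n ∧ i.val = 0)) := by
  obtain ⟨m, rfl⟩ : ∃ m, n = m + 2 := ⟨n - 2, by omega⟩
  have key : ∀ x y : Fin (m+2), x - y = 1 ↔ (y.val + 1 = x.val ∨ (y.val + 1 = m + 2 ∧ x.val = 0)) := by
    intro x y
    rw [sub_eq_iff_eq_add, Fin.ext_iff, Fin.val_add, Fin.val_one]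
    have hx := x.isLt; have hy := y.isLt
    rcases Nat.lt_or_ge (1 + y.val) (m+2) with h' | h'
    · rw [Nat.mod_eq_of_lt h']; omega
    · have h2 : 1 + y.val = m + 2 := by omega
      rw [h2, Nat.mod_self]; omega
  rw [SimpleGraph.cycleGraph_adj, key, key]
  omega

lemma cycle_emb {V : Type} (G : SimpleGraph V) (v : V) (q : ℕ → V) (h a b : ℕ)
    (hb : b ≤ h - 1) (hab : a + 3 ≤ b) (hh : 4 ≤ h)
    (hqv : ∀ i, i < h → q i ≠ v)
    (hqinj : ∀ i j, i < h → j < h → q i = q j → i = j)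
    (hadj : ∀ i j, i < h → j < h → (G.Adj (q i) (q j) ↔ (i + 1 = j ∨ j + 1 = i)))
    (hfa : G.Adj v (q a)) (hfb : G.Adj v (q b))
    (hmid : ∀ j, a < j → j < b → ¬ G.Adj v (q j)) :
    ∃ n : ℕ, 5 ≤ n ∧ Nonempty (SimpleGraph.cycleGraph n ↪g G) := by
  set n := b - a + 2 with hn
  have hn5 : 5 ≤ n := by omega
  refine ⟨n, hn5, ?_⟩
  set x : Fin n → V := fun i => if i.val = 0 then v else q (a + i.val - 1) with hx
  have hrange : ∀ i : Fin n, i.val ≠ 0 → a + i.val - 1 < h := by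
    intro i hi; have := i.isLt; omega
  have hinj : Function.Injective x := by
    intro i j hij
    simp only [hx] at hij
    split_ifs at hij with h1 h2 h2
    · exact Fin.ext (by omega)
    · exact absurd hij.symm (hqv _ (hrange j h2))
    · exact absurd hij (hqv _ (hrange i h1))
    · have := hqinj _ _ (hrange i h1) (hrange j h2) hij
      exact Fin.ext (by omega)
  have hf : ∀ i j : Fin n, G.Adj (x i) (x j) ↔ (SimpleGraph.cycleGraph n).Adj i j := by
    intro i j
    rw [cycAdj' (by omega)]
    have hi := i.isLt; have hj := j.isLt
    simp only [hx]
    split_ifs with h1 h2 h2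
    · refine iff_of_false (G.loopless.irrefl v) ?_
      rintro (hc | hc | hc | hc) <;> omega
    · -- i = 0, j ≠ 0
      constructor
      · intro hadjv
        have hjr := hrange j h2
        by_cases hc : a + j.val - 1 = a
        · left; omega
        · by_cases hc2 : a + j.val - 1 = b
          · right; right; right; omega
          · exact absurd hadjv (hmid _ (by omega) (by omega))
      · rintro (hc | hc | hc | hc)
        · have : a + j.val - 1 = a := by omega
          rw [this]; exact hfa
        · omega
        · omega
        · have : a + j.val - 1 = b := by omega
          rw [this]; exact hfb
    · -- i ≠ 0, j = 0
      rw [G.adj_comm]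
      constructor
      · intro hadjv
        have hir := hrange i h1
        by_cases hc : a + i.val - 1 = a
        · right; left; omega
        · by_cases hc2 : a + i.val - 1 = b
          · right; right; left; omega
          · exact absurd hadjv (hmid _ (by omega) (by omega))
      · rintro (hc | hc | hc | hc)
        · omega
        · have : a + i.val - 1 = a := by omega
          rw [this]; exact hfa
        · have : a + i.val - 1 = b := by omega
          rw [this]; exact hfb
        · omega
    · rw [hadj _ _ (hrange i h1) (hrange j h2)]
      omega
  exact ⟨⟨⟨x, hinj⟩, hf _ _⟩⟩

lemma core (f : ℕ → Prop) (h : ℕ) (hh : 4 ≤ h) (h0 : f 0) (hl : f (h-1)) :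
    (∃ a, a+3 ≤ h-1 ∧ f a ∧ f (a+1) ∧ f (a+2) ∧ f (a+3)) ∨
    (∃ a, a+3 ≤ h-1 ∧ f a ∧ f (a+1) ∧ ¬f (a+2) ∧ f (a+3)) ∨
    (∃ a, a+3 ≤ h-1 ∧ f a ∧ ¬f (a+1) ∧ f (a+2) ∧ f (a+3)) ∨
    (∃ a, a+4 ≤ h-1 ∧ f a ∧ ¬f (a+1) ∧ f (a+2) ∧ ¬f (a+3) ∧ f (a+4)) ∨
    (∃ a b, a+3 ≤ b ∧ b ≤ h-1 ∧ f a ∧ f b ∧ ∀ j, a < j → j < b → ¬f j) := by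
  classical
  by_cases hC : ∃ a b, a+3 ≤ b ∧ b ≤ h-1 ∧ f a ∧ f b ∧ ∀ j, a < j → j < b → ¬f j
  · exact Or.inr (Or.inr (Or.inr (Or.inr hC)))
  have nextGap : ∀ a, f a → a < h-1 →
      ∃ b, a < b ∧ b ≤ h-1 ∧ f b ∧ (∀ j, a < j → j < b → ¬f j) ∧ b ≤ a+2 := by
    intro a hfa ha
    have hex : ∃ b, a < b ∧ b ≤ h-1 ∧ f b := ⟨h-1, ha, le_refl _, hl⟩
    obtain ⟨hb1, hb2, hb3⟩ := Nat.find_spec hex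
    set b := Nat.find hex with hbdef
    have hmid : ∀ j, a < j → j < b → ¬f j := by
      intro j hj1 hj2 hfj
      exact Nat.find_min hex hj2 ⟨hj1, by omega, hfj⟩
    refine ⟨b, hb1, hb2, hb3, hmid, ?_⟩
    by_contra hb4
    exact hC ⟨a, b, by omega, hb2, hfa, hb3, hmid⟩
  have prevN : ∀ m, 0 < m → m ≤ h-1 → ¬f m →
      ∃ a, a < m ∧ f a ∧ ∀ j, a < j → j ≤ m → ¬f j := by
    intro m hm hmh hfm
    set a := Nat.findGreatest f m with hadef
    have hfa : f a := Nat.findGreatest_spec (Nat.zero_le m) h0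
    have ham : a ≤ m := Nat.findGreatest_le m
    have hne : a ≠ m := fun e => hfm (e ▸ hfa)
    refine ⟨a, by omega, hfa, fun j hj1 hj2 hfj => ?_⟩
    exact Nat.findGreatest_is_greatest hj1 hj2 hfj
  by_cases hall : f 1 ∧ f 2 ∧ f 3
  · exact Or.inl ⟨0, by omega, h0, hall.1, hall.2.1, hall.2.2⟩
  have hm : ∃ m, 0 < m ∧ m < h-1 ∧ ¬f m := by
    have h123 : ¬f 1 ∨ ¬f 2 ∨ ¬f 3 := by tauto
    rcases h123 with hx | hx | hx
    · exact ⟨1, by omega, by omega, hx⟩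
    · exact ⟨2, by omega, by omega, hx⟩
    · refine ⟨3, by omega, ?_, hx⟩
      rcases Nat.lt_or_ge 3 (h-1) with h' | h'
      · exact h'
      · exfalso
        have he3 : h - 1 = 3 := by omega
        exact hx (he3 ▸ hl)
  obtain ⟨m, hm0, hm1, hfm⟩ := hm
  obtain ⟨a, ham, hfa, hamax⟩ := prevN m hm0 (by omega) hfm
  obtain ⟨b, hb1, hb2, hfb, hbmid, hble⟩ := nextGap a hfa (by omega)
  have hbm : m < b := by
    by_contra hc
    exact (hamax b (by omega) (by omega)) hfb
  have hba : b = a+2 := by omega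
  have hfa1 : ¬f (a+1) := hbmid (a+1) (by omega) (by omega)
  have hfa2 : f (a+2) := hba ▸ hfb
  have ha2h : a+2 ≤ h-1 := by omega
  by_cases hR : a+3 ≤ h-1 ∧ f (a+3)
  · exact Or.inr (Or.inr (Or.inl ⟨a, hR.1, hfa, hfa1, hfa2, hR.2⟩))
  by_cases hL : 1 ≤ a ∧ f (a-1)
  · refine Or.inr (Or.inl ⟨a-1, by omega, hL.2, ?_, ?_, ?_⟩)
    · rw [show a-1+1 = a by omega]; exact hfa
    · rw [show a-1+2 = a+1 by omega]; exact hfa1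
    · rw [show a-1+3 = a+2 by omega]; exact hfa2
  by_cases hS : a+3 ≤ h-1
  · have hfa3 : ¬f (a+3) := fun hx => hR ⟨hS, hx⟩
    obtain ⟨b', hb'1, hb'2, hfb', hb'mid, hb'le⟩ := nextGap (a+2) hfa2 (by omega)
    have hb'4 : b' = a+4 := by
      have : b' ≠ a+3 := fun e => hfa3 (e ▸ hfb')
      omega
    exact Or.inr (Or.inr (Or.inr (Or.inl ⟨a, by omega, hfa, hfa1, hfa2, hfa3, hb'4 ▸ hfb'⟩)))
  · have he : a + 2 = h - 1 := by omega
    have hage : 1 ≤ a := by omega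
    have hfam : ¬f (a-1) := fun hx => hL ⟨hage, hx⟩
    have hage2 : 2 ≤ a := by
      rcases Nat.lt_or_ge a 2 with h' | h'
      · exfalso
        have h10 : a - 1 = 0 := by omega
        exact hfam (h10 ▸ h0)
      · exact h'
    obtain ⟨a'', ha''1, hfa'', ha''max⟩ := prevN (a-1) (by omega) (by omega) hfam
    obtain ⟨b'', hb''1, hb''2, hfb'', hb''mid, hb''le⟩ := nextGap a'' hfa'' (by omega)
    have hb''a : b'' = a := by
      have h1' : ¬ (a < b'') := fun hc => hb''mid a (by omega) hc hfa
      have h2' : ¬ (b'' ≤ a - 1) := fun hc => ha''max b'' (by omega) (by omega) hfb''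
      omega
    have ha''2 : a'' = a - 2 := by omega
    refine Or.inr (Or.inr (Or.inr (Or.inl ⟨a-2, by omega, ha''2 ▸ hfa'', ?_, ?_, ?_, ?_⟩)))
    · rw [show a-2+1 = a-1 by omega]; exact hfam
    · rw [show a-2+2 = a by omega]; exact hfa
    · rw [show a-2+3 = a+1 by omega]; exact hfa1
    · rw [show a-2+4 = a+2 by omega]; exact hfa2

lemma gem_emb {V : Type} (G : SimpleGraph V) (x0 x1 x2 x3 x4 : V)
    (d01 : x0 ≠ x1) (d02 : x0 ≠ x2) (d03 : x0 ≠ x3) (d04 : x0 ≠ x4)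
    (d12 : x1 ≠ x2) (d13 : x1 ≠ x3) (d14 : x1 ≠ x4)
    (d23 : x2 ≠ x3) (d24 : x2 ≠ x4) (d34 : x3 ≠ x4)
    (e01 : G.Adj x0 x1) (e02 : G.Adj x0 x2) (e03 : G.Adj x0 x3) (e04 : G.Adj x0 x4)
    (e12 : G.Adj x1 x2) (e23 : G.Adj x2 x3) (e34 : G.Adj x3 x4)
    (n13 : ¬G.Adj x1 x3) (n14 : ¬G.Adj x1 x4) (n24 : ¬G.Adj x2 x4) :
    Nonempty (gem ↪g G) := by
  have s01 := e01.symm; have s02 := e02.symm; have s03 := e03.symm; have s04 := e04.symm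
  have s12 := e12.symm; have s23 := e23.symm; have s34 := e34.symm
  have m13 : ¬G.Adj x3 x1 := fun hx => n13 hx.symm
  have m14 : ¬G.Adj x4 x1 := fun hx => n14 hx.symm
  have m24 : ¬G.Adj x4 x2 := fun hx => n24 hx.symm
  have u01 := d01.symm; have u02 := d02.symm; have u03 := d03.symm; have u04 := d04.symm
  have u12 := d12.symm; have u13 := d13.symm; have u14 := d14.symm
  have u23 := d23.symm; have u24 := d24.symm; have u34 := d34.symm
  have hinj : Function.Injective ![x0,x1,x2,x3,x4] := by
    intro i j hij; fin_cases i <;> fin_cases j <;> simp_all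
  have hf : ∀ i j : Fin 5, G.Adj (![x0,x1,x2,x3,x4] i) (![x0,x1,x2,x3,x4] j) ↔ gem.Adj i j := by
    intro i j; fin_cases i <;> fin_cases j <;>
      simp_all (config := {decide := true}) [gem, SimpleGraph.fromRel_adj]
  exact ⟨⟨⟨_, hinj⟩, hf _ _⟩⟩

lemma house_emb {V : Type} (G : SimpleGraph V) (x0 x1 x2 x3 x4 : V)
    (d01 : x0 ≠ x1) (d02 : x0 ≠ x2) (d03 : x0 ≠ x3) (d04 : x0 ≠ x4)
    (d12 : x1 ≠ x2) (d13 : x1 ≠ x3) (d14 : x1 ≠ x4)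
    (d23 : x2 ≠ x3) (d24 : x2 ≠ x4) (d34 : x3 ≠ x4)
    (e01 : G.Adj x0 x1) (e02 : G.Adj x0 x2) (e12 : G.Adj x1 x2)
    (e23 : G.Adj x2 x3) (e34 : G.Adj x3 x4) (e14 : G.Adj x1 x4)
    (n03 : ¬G.Adj x0 x3) (n04 : ¬G.Adj x0 x4) (n13 : ¬G.Adj x1 x3) (n24 : ¬G.Adj x2 x4) :
    Nonempty (house ↪g G) := by
  have s01 := e01.symm; have s02 := e02.symm; have s12 := e12.symm
  have s23 := e23.symm; have s34 := e34.symm; have s14 := e14.symm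
  have m03 : ¬G.Adj x3 x0 := fun hx => n03 hx.symm
  have m04 : ¬G.Adj x4 x0 := fun hx => n04 hx.symm
  have m13 : ¬G.Adj x3 x1 := fun hx => n13 hx.symm
  have m24 : ¬G.Adj x4 x2 := fun hx => n24 hx.symm
  have u01 := d01.symm; have u02 := d02.symm; have u03 := d03.symm; have u04 := d04.symm
  have u12 := d12.symm; have u13 := d13.symm; have u14 := d14.symm
  have u23 := d23.symm; have u24 := d24.symm; have u34 := d34.symm
  have hinj : Function.Injective ![x0,x1,x2,x3,x4] := by
    intro i j hij; fin_cases i <;> fin_cases j <;> simp_all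
  have hf : ∀ i j : Fin 5, G.Adj (![x0,x1,x2,x3,x4] i) (![x0,x1,x2,x3,x4] j) ↔ house.Adj i j := by
    intro i j; fin_cases i <;> fin_cases j <;>
      simp_all (config := {decide := true}) [house, SimpleGraph.fromRel_adj]
  exact ⟨⟨⟨_, hinj⟩, hf _ _⟩⟩

instance : DecidableRel domino.Adj := fun a b =>
  decidable_of_iff _ (SimpleGraph.fromRel_adj _ a b).symm

lemma domino_emb {V : Type} (G : SimpleGraph V) (x0 x1 x2 x3 x4 x5 : V)
    (d01 : x0 ≠ x1) (d02 : x0 ≠ x2) (d03 : x0 ≠ x3) (d04 : x0 ≠ x4) (d05 : x0 ≠ x5)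
    (d12 : x1 ≠ x2) (d13 : x1 ≠ x3) (d14 : x1 ≠ x4) (d15 : x1 ≠ x5)
    (d23 : x2 ≠ x3) (d24 : x2 ≠ x4) (d25 : x2 ≠ x5)
    (d34 : x3 ≠ x4) (d35 : x3 ≠ x5) (d45 : x4 ≠ x5)
    (e01 : G.Adj x0 x1) (e12 : G.Adj x1 x2) (e23 : G.Adj x2 x3)
    (e34 : G.Adj x3 x4) (e45 : G.Adj x4 x5) (e50 : G.Adj x5 x0) (e14 : G.Adj x1 x4)
    (n02 : ¬G.Adj x0 x2) (n03 : ¬G.Adj x0 x3) (n04 : ¬G.Adj x0 x4)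
    (n13 : ¬G.Adj x1 x3) (n15 : ¬G.Adj x1 x5)
    (n24 : ¬G.Adj x2 x4) (n25 : ¬G.Adj x2 x5) (n35 : ¬G.Adj x3 x5) :
    Nonempty (domino ↪g G) := by
  have s01 := e01.symm; have s12 := e12.symm; have s23 := e23.symm
  have s34 := e34.symm; have s45 := e45.symm; have s50 := e50.symm; have s14 := e14.symm
  have m02 : ¬G.Adj x2 x0 := fun hx => n02 hx.symm
  have m03 : ¬G.Adj x3 x0 := fun hx => n03 hx.symm
  have m04 : ¬G.Adj x4 x0 := fun hx => n04 hx.symm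
  have m13 : ¬G.Adj x3 x1 := fun hx => n13 hx.symm
  have m15 : ¬G.Adj x5 x1 := fun hx => n15 hx.symm
  have m24 : ¬G.Adj x4 x2 := fun hx => n24 hx.symm
  have m25 : ¬G.Adj x5 x2 := fun hx => n25 hx.symm
  have m35 : ¬G.Adj x5 x3 := fun hx => n35 hx.symm
  have u01 := d01.symm; have u02 := d02.symm; have u03 := d03.symm; have u04 := d04.symm
  have u05 := d05.symm; have u12 := d12.symm; have u13 := d13.symm; have u14 := d14.symm
  have u15 := d15.symm; have u23 := d23.symm; have u24 := d24.symm; have u25 := d25.symm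
  have u34 := d34.symm; have u35 := d35.symm; have u45 := d45.symm
  have hinj : Function.Injective ![x0,x1,x2,x3,x4,x5] := by
    intro i j hij
    fin_cases i <;> fin_cases j <;>
      first
        | rfl
        | (simp only [Matrix.cons_val_zero, Matrix.cons_val_one, Matrix.head_cons,
             Matrix.cons_val_succ, Matrix.cons_val_fin_one] at hij
           exact absurd hij (by assumption))
  have hf : ∀ i j : Fin 6, G.Adj (![x0,x1,x2,x3,x4,x5] i) (![x0,x1,x2,x3,x4,x5] j) ↔ domino.Adj i j := by
    intro i j
    fin_cases i <;> fin_cases j <;>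
      simp only [Matrix.cons_val_zero, Matrix.cons_val_one, Matrix.head_cons,
        Matrix.cons_val_succ, Matrix.cons_val_fin_one] <;>
      first
        | exact iff_of_false (G.loopless.irrefl _) (by decide)
        | exact iff_of_true (by assumption) (by decide)
        | exact iff_of_false (by assumption) (by decide)
  exact ⟨⟨⟨_, hinj⟩, hf _ _⟩⟩

/-- if `G − v` is an induced path `p 0, …, p (h-1)` with `h ≥ 4` and `v` is
adjacent to both endpoints, then `G` contains an induced house, gem, domino, or an
induced (chordless) cycle of length at least 5. -/
theorem stmt0 {V : Type} [Fintype V] (G : SimpleGraph V) (v : V) (h : ℕ) (hh : 4 ≤ h)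
    (p : Fin h → V) (hinj : Function.Injective p) (hpv : ∀ i, p i ≠ v)
    (hcover : ∀ w : V, w ≠ v → ∃ i, p i = w)
    (hpath : ∀ i j : Fin h, G.Adj (p i) (p j) ↔ (i.1 + 1 = j.1 ∨ j.1 + 1 = i.1))
    (h1 : G.Adj v (p ⟨0, by omega⟩)) (h2 : G.Adj v (p ⟨h-1, by omega⟩)) :
    Nonempty (house ↪g G) ∨ Nonempty (gem ↪g G) ∨ Nonempty (domino ↪g G) ∨
      ∃ n : ℕ, 5 ≤ n ∧ Nonempty (SimpleGraph.cycleGraph n ↪g G) := by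
  classical
  set q : ℕ → V := fun i => if hi : i < h then p ⟨i, hi⟩ else v with hqdef
  have hqv : ∀ i, i < h → q i ≠ v := by
    intro i hi
    simp only [hqdef, dif_pos hi]
    exact hpv _
  have hqinj : ∀ i j, i < h → j < h → q i = q j → i = j := by
    intro i j hi hj e
    simp only [hqdef, dif_pos hi, dif_pos hj] at e
    simpa using congrArg Fin.val (hinj e)
  have hadj : ∀ i j, i < h → j < h → (G.Adj (q i) (q j) ↔ (i + 1 = j ∨ j + 1 = i)) := by
    intro i j hi hj
    simp only [hqdef, dif_pos hi, dif_pos hj]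
    exact hpath _ _
  have h0' : G.Adj v (q 0) := by
    simp only [hqdef, dif_pos (show 0 < h by omega)]
    exact h1
  have hl' : G.Adj v (q (h-1)) := by
    simp only [hqdef, dif_pos (show h-1 < h by omega)]
    exact h2
  have qne : ∀ i j, i < h → j < h → i ≠ j → q i ≠ q j :=
    fun i j hi hj hij e => hij (hqinj _ _ hi hj e)
  have vq : ∀ i, i < h → v ≠ q i := fun i hi => (hqv i hi).symm
  have qN : ∀ i j, i < h → j < h → i + 1 ≠ j → j + 1 ≠ i → ¬G.Adj (q i) (q j) := by
    intro i j hi hj h1' h2' hx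
    rcases (hadj i j hi hj).mp hx with hc | hc <;> omega
  rcases core (fun i => G.Adj v (q i)) h hh h0' hl' with
    ⟨a, hb, f0, f1', f2', f3'⟩ | ⟨a, hb, f0, f1', f2', f3'⟩ |
    ⟨a, hb, f0, f1', f2', f3'⟩ | ⟨a, hb, f0, f1', f2', f3', f4'⟩ |
    ⟨a, b, h3, hbh, fa, fb, fmid⟩
  · -- gem: v adjacent to four consecutive
    refine Or.inr (Or.inl (gem_emb G v (q a) (q (a+1)) (q (a+2)) (q (a+3))
      (vq _ (by omega)) (vq _ (by omega)) (vq _ (by omega)) (vq _ (by omega))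
      (qne _ _ (by omega) (by omega) (by omega)) (qne _ _ (by omega) (by omega) (by omega))
      (qne _ _ (by omega) (by omega) (by omega)) (qne _ _ (by omega) (by omega) (by omega))
      (qne _ _ (by omega) (by omega) (by omega)) (qne _ _ (by omega) (by omega) (by omega))
      f0 f1' f2' f3'
      ((hadj _ _ (by omega) (by omega)).mpr (Or.inl rfl))
      ((hadj _ _ (by omega) (by omega)).mpr (Or.inl rfl))
      ((hadj _ _ (by omega) (by omega)).mpr (Or.inl rfl))
      (qN _ _ (by omega) (by omega) (by omega) (by omega))
      (qN _ _ (by omega) (by omega) (by omega) (by omega))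
      (qN _ _ (by omega) (by omega) (by omega) (by omega))))
  · -- house, pattern f,f,¬f,f
    refine Or.inl (house_emb G (q a) v (q (a+1)) (q (a+2)) (q (a+3))
      (hqv _ (by omega))
      (qne _ _ (by omega) (by omega) (by omega)) (qne _ _ (by omega) (by omega) (by omega))
      (qne _ _ (by omega) (by omega) (by omega))
      (vq _ (by omega)) (vq _ (by omega)) (vq _ (by omega))
      (qne _ _ (by omega) (by omega) (by omega)) (qne _ _ (by omega) (by omega) (by omega))
      (qne _ _ (by omega) (by omega) (by omega))
      f0.symm
      ((hadj _ _ (by omega) (by omega)).mpr (Or.inl rfl))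
      f1'
      ((hadj _ _ (by omega) (by omega)).mpr (Or.inl rfl))
      ((hadj _ _ (by omega) (by omega)).mpr (Or.inl rfl))
      f3'
      (qN _ _ (by omega) (by omega) (by omega) (by omega))
      (qN _ _ (by omega) (by omega) (by omega) (by omega))
      f2'
      (qN _ _ (by omega) (by omega) (by omega) (by omega)))
  · -- house, pattern f,¬f,f,f
    refine Or.inl (house_emb G (q (a+3)) v (q (a+2)) (q (a+1)) (q a)
      (hqv _ (by omega))
      (qne _ _ (by omega) (by omega) (by omega)) (qne _ _ (by omega) (by omega) (by omega))
      (qne _ _ (by omega) (by omega) (by omega))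
      (vq _ (by omega)) (vq _ (by omega)) (vq _ (by omega))
      (qne _ _ (by omega) (by omega) (by omega)) (qne _ _ (by omega) (by omega) (by omega))
      (qne _ _ (by omega) (by omega) (by omega))
      f3'.symm
      ((hadj _ _ (by omega) (by omega)).mpr (Or.inr rfl))
      f2'
      ((hadj _ _ (by omega) (by omega)).mpr (Or.inr rfl))
      ((hadj _ _ (by omega) (by omega)).mpr (Or.inr rfl))
      f0
      (qN _ _ (by omega) (by omega) (by omega) (by omega))
      (qN _ _ (by omega) (by omega) (by omega) (by omega))
      f1'
      (qN _ _ (by omega) (by omega) (by omega) (by omega)))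
  · -- domino, pattern f,¬f,f,¬f,f
    refine Or.inr (Or.inr (Or.inl (domino_emb G (q a) v (q (a+4)) (q (a+3)) (q (a+2)) (q (a+1))
      (hqv _ (by omega))
      (qne _ _ (by omega) (by omega) (by omega)) (qne _ _ (by omega) (by omega) (by omega))
      (qne _ _ (by omega) (by omega) (by omega)) (qne _ _ (by omega) (by omega) (by omega))
      (vq _ (by omega)) (vq _ (by omega)) (vq _ (by omega)) (vq _ (by omega))
      (qne _ _ (by omega) (by omega) (by omega)) (qne _ _ (by omega) (by omega) (by omega))
      (qne _ _ (by omega) (by omega) (by omega)) (qne _ _ (by omega) (by omega) (by omega))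
      (qne _ _ (by omega) (by omega) (by omega)) (qne _ _ (by omega) (by omega) (by omega))
      f0.symm
      f4'
      ((hadj _ _ (by omega) (by omega)).mpr (Or.inr rfl))
      ((hadj _ _ (by omega) (by omega)).mpr (Or.inr rfl))
      ((hadj _ _ (by omega) (by omega)).mpr (Or.inr rfl))
      ((hadj _ _ (by omega) (by omega)).mpr (Or.inr rfl))
      f2'
      (qN _ _ (by omega) (by omega) (by omega) (by omega))
      (qN _ _ (by omega) (by omega) (by omega) (by omega))
      (qN _ _ (by omega) (by omega) (by omega) (by omega))
      f3'
      f1'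
      (qN _ _ (by omega) (by omega) (by omega) (by omega))
      (qN _ _ (by omega) (by omega) (by omega) (by omega))
      (qN _ _ (by omega) (by omega) (by omega) (by omega)))))
  · -- long induced cycle
    exact Or.inr (Or.inr (Or.inr
      (cycle_emb G v q h a b hbh h3 hh hqv hqinj hadj fa fb fmid)))


end LRW1
end

section
/- Let G be a graph containing an induced path v₁v₂v₃v₄v₅ of length 4, and suppose there are two distinct vertices w₁, w₂ outside {v₁,...,v₅} each adjacent to both v₂ and v₄. Then G − v₃ contains an induced subgraph with at most 7 vertices isomorphic to some graph that is an obstruction to having linear rankwidth at most 1 (in particular, G − v₃ is not a graph of linear rankwidth at most 1, i.e., not a thread graph). -/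
open scoped Classical

namespace LRW1

section Auxiliary

theorem rank_submatrix_le'' {R : Type*} [CommRing R] [StrongRankCondition R] {m n l o : Type*}
    [Fintype m] [Fintype n] [Fintype l] [Fintype o]
    (A : Matrix m n R) (f : l → m) (g : o → n) :
    (A.submatrix f g).rank ≤ A.rank := by
  classical
  have h : A.submatrix f g =
      (Matrix.of fun (i : l) (j : m) => if f i = j then (1 : R) else 0) * A *
      (Matrix.of fun (j : n) (k : o) => if g k = j then (1 : R) else 0) := by
    ext i k
    simp [Matrix.mul_apply, Finset.sum_ite_eq, Finset.sum_ite_eq']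
  rw [h]
  exact le_trans (Matrix.rank_mul_le_left _ _) (Matrix.rank_mul_le_right _ _)

theorem two_le_cutRank {V : Type} [Fintype V] (G : SimpleGraph V) (S : Set V)
    {a b c d : V} (ha : a ∈ S) (hb : b ∈ S) (hc : c ∈ Sᶜ) (hd : d ∈ Sᶜ)
    (hac : G.Adj a c) (hbd : G.Adj b d) (hno : ¬ (G.Adj a d ∧ G.Adj b c)) :
    2 ≤ cutRank G S := by
  unfold cutRank
  set M : Matrix ↥S ↥(Sᶜ) (ZMod 2) :=
    Matrix.of fun (i : ↥S) (j : ↥(Sᶜ)) => if G.Adj i.1 j.1 then (1 : ZMod 2) else 0 with hM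
  have hdet : (M.submatrix ![⟨a, ha⟩, ⟨b, hb⟩] ![⟨c, hc⟩, ⟨d, hd⟩]).det = 1 := by
    rw [Matrix.det_fin_two]
    simp only [Matrix.submatrix_apply, Matrix.cons_val_zero, Matrix.cons_val_one,
      Matrix.head_cons, hM, Matrix.of_apply, if_pos hac, if_pos hbd]
    rcases not_and_or.mp hno with h1 | h1
    · rw [if_neg h1]; ring
    · rw [if_neg h1]; ring
  have hrk : (M.submatrix ![⟨a, ha⟩, ⟨b, hb⟩] ![⟨c, hc⟩, ⟨d, hd⟩]).rank = 2 := by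
    rw [Matrix.rank_of_isUnit _ ((Matrix.isUnit_iff_isUnit_det _).2 (hdet ▸ isUnit_one))]
    simp
  calc (2 : ℕ) = _ := hrk.symm
    _ ≤ M.rank := rank_submatrix_le'' M _ _

theorem cutRank_mono {W W' : Type} [Fintype W] [Fintype W']
    (H : SimpleGraph W) (H' : SimpleGraph W') (φ : W' → W)
    (hadj : ∀ a b, H'.Adj a b ↔ H.Adj (φ a) (φ b)) (S : Set W') (T : Set W)
    (hST : ∀ v, v ∈ S ↔ φ v ∈ T) : cutRank H' S ≤ cutRank H T := by
  unfold cutRank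
  have key : (Matrix.of fun (i : ↥S) (j : ↥(Sᶜ)) => if H'.Adj i.1 j.1 then (1 : ZMod 2) else 0) =
      (Matrix.of fun (x : ↥T) (y : ↥(Tᶜ)) => if H.Adj x.1 y.1 then (1 : ZMod 2) else 0).submatrix
        (fun v : ↥S => (⟨φ v.1, (hST v.1).1 v.2⟩ : ↥T))
        (fun v : ↥(Sᶜ) => (⟨φ v.1, fun hT => v.2 ((hST v.1).2 hT)⟩ : ↥(Tᶜ))) := by
    ext x y
    simp [Matrix.submatrix_apply, hadj]
  rw [key]
  exact rank_submatrix_le'' _ _ _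

set_option maxHeartbeats 1000000 in
theorem linRankwidthLE_mono {W W' : Type} [Fintype W] [Fintype W']
    (H : SimpleGraph W) (H' : SimpleGraph W') (φ : W' → W) (hφ : Function.Injective φ)
    (hadj : ∀ a b, H'.Adj a b ↔ H.Adj (φ a) (φ b)) {k : ℕ}
    (h : LinRankwidthLE H k) : LinRankwidthLE H' k := by
  obtain ⟨σ, hσ⟩ := h
  letI : LinearOrder W' := LinearOrder.lift' (fun v => σ (φ v)) (fun a b hab => hφ (σ.injective hab))
  have hle : ∀ a b : W', a ≤ b ↔ σ (φ a) ≤ σ (φ b) := fun a b => Iff.rfl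
  let τ : W' ≃o Fin (Fintype.card W') := (monoEquivOfFin W' rfl).symm
  refine ⟨τ.toEquiv, fun i => ?_⟩
  obtain ⟨m, hm⟩ : ∃ m : ℕ, ∀ v : W', ((τ v : ℕ) < i ↔ (σ (φ v) : ℕ) < m) := by
    by_cases hne : (Finset.univ.filter (fun v : W' => ((τ v : ℕ) < i))).Nonempty
    · set A := Finset.univ.filter (fun v : W' => ((τ v : ℕ) < i)) with hA
      refine ⟨(σ (φ (A.max' hne)) : ℕ) + 1, fun v => ?_⟩
      constructor
      · intro hv
        have h0 : v ≤ A.max' hne := A.le_max' v (by simp [hA, hv])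
        have := (hle _ _).1 h0
        omega
      · intro hv
        have h1 : v ≤ A.max' hne := (hle _ _).2 (Fin.le_def.2 (by omega))
        have h2 : τ v ≤ τ (A.max' hne) := τ.monotone h1
        have h3 : ((τ (A.max' hne)) : ℕ) < i := by
          have := A.max'_mem hne; simp [hA] at this; exact this
        calc ((τ v) : ℕ) ≤ _ := h2
          _ < i := h3
    · refine ⟨0, fun v => ?_⟩
      simp only [Finset.not_nonempty_iff_eq_empty, Finset.filter_eq_empty_iff] at hne
      exact ⟨fun hv => absurd hv (hne (Finset.mem_univ v)), by omega⟩
  refine le_trans ?_ (hσ m)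
  have hset : {v : W' | ((τ.toEquiv v : ℕ)) < i} = {v : W' | (σ (φ v) : ℕ) < m} := by
    ext v; exact hm v
  rw [hset]
  exact cutRank_mono H H' φ hadj _ _ (fun v => Iff.rfl)

/-- Adjacency pattern of the six special vertices `p 0, p 1, p 3, p 4, w₁, w₂`,
where `u` records the five a-priori-unknown adjacencies. -/
def cadj (u : Fin 5 → Bool) (i j : Fin 6) : Bool :=
  match i.val, j.val with
  | 0, 1 => true | 1, 0 => true
  | 2, 3 => true | 3, 2 => true
  | 4, 1 => true | 1, 4 => true
  | 4, 2 => true | 2, 4 => true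
  | 5, 1 => true | 1, 5 => true
  | 5, 2 => true | 2, 5 => true
  | 4, 5 => u 0 | 5, 4 => u 0
  | 4, 0 => u 1 | 0, 4 => u 1
  | 4, 3 => u 2 | 3, 4 => u 2
  | 5, 0 => u 3 | 0, 5 => u 3
  | 5, 3 => u 4 | 3, 5 => u 4
  | _, _ => false

set_option maxRecDepth 10000 in
/-- The finite combinatorial core: for every assignment of the unknown adjacencies,
every 3-element subset of the six special vertices admits an invertible `2 × 2`
cross submatrix. -/
theorem cadj_key : ∀ u : Fin 5 → Bool, ∀ S : Finset (Fin 6), S.card = 3 →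
    ∃ a ∈ S, ∃ b ∈ S, ∃ c ∈ Sᶜ, ∃ d ∈ Sᶜ,
      cadj u a c = true ∧ cadj u b d = true ∧ ¬(cadj u a d = true ∧ cadj u b c = true) := by
  decide

theorem filter_lt_card (N : ℕ) (h : 3 ≤ N) :
    (Finset.univ.filter fun j : Fin N => (j : ℕ) < 3).card = 3 := by
  have heq : (Finset.univ.filter fun j : Fin N => (j : ℕ) < 3)
      = Finset.image (Fin.castLE h) Finset.univ := by
    ext j
    simp only [Finset.mem_filter, Finset.mem_univ, true_and, Finset.mem_image]
    constructor
    · intro hj; exact ⟨⟨(j : ℕ), hj⟩, by ext; simp⟩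
    · rintro ⟨a, rfl⟩; exact a.2
  rw [heq, Finset.card_image_of_injective _ (Fin.castLE_injective h), Finset.card_univ,
    Fintype.card_fin]

end Auxiliary

/-- if `p 0 … p 4` is an induced path of length 4 in `G` and two distinct
vertices `w₁, w₂` outside the path are both adjacent to `p 1` and `p 3`, then `G − p 2`
contains an induced subgraph on at most 7 vertices of linear rankwidth more than 1
(i.e. isomorphic to an obstruction to linear rankwidth at most 1); in particular
`G − p 2` does not have linear rankwidth at most 1. -/
theorem stmt1 {V : Type} [Fintype V] (G : SimpleGraph V) (p : Fin 5 → V)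
    (hinj : Function.Injective p)
    (hpath : ∀ i j : Fin 5, G.Adj (p i) (p j) ↔ (i.1 + 1 = j.1 ∨ j.1 + 1 = i.1))
    (w₁ w₂ : V) (hw : w₁ ≠ w₂) (hw1 : ∀ i, w₁ ≠ p i) (hw2 : ∀ i, w₂ ≠ p i)
    (a1 : G.Adj w₁ (p 1)) (a2 : G.Adj w₁ (p 3))
    (a3 : G.Adj w₂ (p 1)) (a4 : G.Adj w₂ (p 3)) :
    (∃ s : Set V, p 2 ∉ s ∧ s.ncard ≤ 7 ∧ ¬ LinRankwidthLE (G.induce s) 1) ∧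
    ¬ LinRankwidthLE (G.induce {x : V | x ≠ p 2}) 1 := by
  set f : Fin 6 → V := ![p 0, p 1, p 3, p 4, w₁, w₂] with hf
  have hfinj : Function.Injective f := by
    have hpne : ∀ i j : Fin 5, i ≠ j → p i ≠ p j := fun i j hij h => hij (hinj h)
    intro i j h
    fin_cases i <;> fin_cases j <;>
      simp_all [hf] <;>
      first
        | rfl
        | exact absurd h (hpne _ _ (by decide))
        | exact absurd h.symm (hpne _ _ (by decide))
        | exact absurd h.symm (hw1 _)
        | exact absurd h (hw1 _)
        | exact absurd h.symm (hw2 _)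
        | exact absurd h (hw2 _)
        | exact absurd h hw
        | exact absurd h.symm hw
  obtain ⟨s, hs⟩ : ∃ s : Set V, s = Set.range f := ⟨_, rfl⟩
  have hp2 : p 2 ∉ s := by
    rw [hs]
    rintro ⟨i, hi⟩
    fin_cases i <;> simp_all [hf] <;>
      first
        | exact absurd (hinj hi) (by decide)
        | exact absurd hi (hw1 _)
        | exact absurd hi (hw2 _)
  have hcard7 : s.ncard ≤ 7 := by
    calc s.ncard = (f '' Set.univ).ncard := by rw [hs, Set.image_univ]
      _ ≤ (Set.univ : Set (Fin 6)).ncard := Set.ncard_image_le (Set.finite_univ)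
      _ = 6 := by rw [Set.ncard_univ]; simp
      _ ≤ 7 := by omega
  set u : Fin 5 → Bool := ![decide (G.Adj w₁ w₂), decide (G.Adj w₁ (p 0)),
    decide (G.Adj w₁ (p 4)), decide (G.Adj w₂ (p 0)), decide (G.Adj w₂ (p 4))] with hu
  have hadjf : ∀ i j : Fin 6, cadj u i j = true ↔ G.Adj (f i) (f j) := by
    intro i j
    fin_cases i <;> fin_cases j <;>
      simp [cadj, hu, hf, hpath] <;>
      first
        | decide
        | exact a1 | exact a2 | exact a3 | exact a4
        | exact a1.symm | exact a2.symm | exact a3.symm | exact a4.symm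
        | exact G.adj_comm _ _
        | exact Iff.rfl
  have hnot : ¬ LinRankwidthLE (G.induce s) 1 := by
    rintro ⟨σ, hσ⟩
    have hmem : ∀ i : Fin 6, f i ∈ s := fun i => hs ▸ Set.mem_range_self i
    set f' : Fin 6 → ↥s := fun i => ⟨f i, hmem i⟩ with hf'
    have hf'bij : Function.Bijective f' := by
      constructor
      · intro i j h; exact hfinj (congrArg Subtype.val h)
      · rintro ⟨x, hx⟩
        rw [hs] at hx
        obtain ⟨i, rfl⟩ := hx
        exact ⟨i, rfl⟩
    have hcard : Fintype.card ↥s = 6 :=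
      (Fintype.card_congr (Equiv.ofBijective f' hf'bij).symm).trans (Fintype.card_fin 6)
    set g : Fin 6 → Fin (Fintype.card ↥s) := fun i => σ (f' i) with hg
    have hgbij : Function.Bijective g := (σ.bijective).comp hf'bij
    set T : Finset (Fin 6) := Finset.univ.filter (fun i => ((g i : ℕ) < 3)) with hT
    have hTcard : T.card = 3 := by
      have himg : T.image g
          = Finset.univ.filter (fun j : Fin (Fintype.card ↥s) => (j : ℕ) < 3) := by
        ext j
        simp only [Finset.mem_image, hT, Finset.mem_filter, Finset.mem_univ, true_and]
        constructor
        · rintro ⟨i, hi, rfl⟩; exact hi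
        · intro hj; obtain ⟨i, rfl⟩ := hgbij.2 j; exact ⟨i, hj, rfl⟩
      have hci := Finset.card_image_of_injective T hgbij.1
      rw [himg] at hci
      rw [← hci, filter_lt_card _ (by omega)]
    obtain ⟨a, haT, b, hbT, c, hcT, d, hdT, hac, hbd, hno⟩ := cadj_key u T hTcard
    set S : Set ↥s := {v : ↥s | (σ v : ℕ) < 3} with hS
    have hmemS : ∀ x : Fin 6, x ∈ T → f' x ∈ S := by
      intro x hx; simp only [hT, Finset.mem_filter] at hx; exact hx.2
    have hmemSc : ∀ x : Fin 6, x ∈ Tᶜ → f' x ∈ Sᶜ := by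
      intro x hx hmem'
      rw [Finset.mem_compl, hT, Finset.mem_filter] at hx
      exact hx ⟨Finset.mem_univ x, hmem'⟩
    have hadj' : ∀ i j : Fin 6, cadj u i j = true ↔ (G.induce s).Adj (f' i) (f' j) := by
      intro i j
      rw [hadjf i j]
      exact Iff.rfl
    have h2 := two_le_cutRank (G.induce s) S (hmemS a haT) (hmemS b hbT)
      (hmemSc c hcT) (hmemSc d hdT) ((hadj' a c).1 hac) ((hadj' b d).1 hbd)
      (fun hcontra => hno ⟨(hadj' a d).2 hcontra.1, (hadj' b c).2 hcontra.2⟩)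
    have h3 := hσ 3
    rw [← hS] at h3
    omega
  refine ⟨⟨s, hp2, hcard7, hnot⟩, ?_⟩
  intro hbig
  apply hnot
  refine linRankwidthLE_mono (G.induce {x : V | x ≠ p 2}) (G.induce s)
    (fun v => ⟨v.1, fun h => hp2 (h ▸ v.2)⟩) ?_ ?_ hbig
  · intro x y h
    simp only [Subtype.mk.injEq] at h
    exact Subtype.ext h
  · intro x y
    exact Iff.rfl

end LRW1
end

section
/- Let G be a connected necklace graph whose underlying directed cycle C has length h ≥ 9. Then the distance in G between any pair of vertices of G is at most h − 3. -/
open scoped Classical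

namespace LRW1

/-- The endpoints of a thread block are adjacent. -/
lemma tb_adj {V : Type} {G : SimpleGraph V} {B : Finset V} {x y : V}
    (hB : IsThreadBlock G B x y) : G.Adj x y := by
  obtain ⟨hcard, hx, hy, σ, lL, lR, hall, hx0, hxR, hxL, hyN, hyL, hyR, hadj⟩ := hB
  have hlt : (σ ⟨x, hx⟩ : ℕ) < (σ ⟨y, hy⟩ : ℕ) := by
    rw [hx0 hx, hyN hy]; omega
  exact (hadj _ _ hlt).2 ⟨hxR, hyL⟩

/-- Every vertex of a thread block is equal or adjacent to an endpoint. -/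
lemma tb_near {V : Type} {G : SimpleGraph V} {B : Finset V} {x y a : V}
    (hB : IsThreadBlock G B x y) (ha : a ∈ B) :
    a = x ∨ a = y ∨ G.Adj a x ∨ G.Adj a y := by
  obtain ⟨hcard, hx, hy, σ, lL, lR, hall, hx0, hxR, hxL, hyN, hyL, hyR, hadj⟩ := hB
  by_cases hax : a = x
  · exact Or.inl hax
  by_cases hay : a = y
  · exact Or.inr (Or.inl hay)
  have h1 : 0 < (σ ⟨a, ha⟩ : ℕ) := by
    rcases Nat.eq_zero_or_pos (σ ⟨a, ha⟩ : ℕ) with h0 | h0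
    · exfalso; apply hax
      have : σ ⟨a, ha⟩ = σ ⟨x, hx⟩ := Fin.ext (by rw [hx0 hx]; exact h0)
      exact congrArg Subtype.val (σ.injective this)
    · exact h0
  have h2 : (σ ⟨a, ha⟩ : ℕ) < B.card - 1 := by
    have hb := (σ ⟨a, ha⟩).2
    rcases Nat.lt_or_ge (σ ⟨a, ha⟩ : ℕ) (B.card - 1) with h0 | h0
    · exact h0
    · exfalso; apply hay
      have : σ ⟨a, ha⟩ = σ ⟨y, hy⟩ := Fin.ext (by rw [hyN hy]; omega)
      exact congrArg Subtype.val (σ.injective this)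
  rcases hall ⟨a, ha⟩ with hL | hR
  · refine Or.inr (Or.inr (Or.inl ?_))
    exact ((hadj ⟨x, hx⟩ ⟨a, ha⟩ (by rw [hx0 hx]; exact h1)).2 ⟨hxR, hL⟩).symm
  · refine Or.inr (Or.inr (Or.inr ?_))
    exact (hadj ⟨a, ha⟩ ⟨y, hy⟩ (by rw [hyN hy]; exact h2)).2 ⟨hR, hyL⟩

lemma adj_dist_le_one {V : Type} {G : SimpleGraph V} {a b : V} (hab : G.Adj a b) :
    G.dist a b ≤ 1 := by
  have := SimpleGraph.dist_le (SimpleGraph.Walk.cons hab SimpleGraph.Walk.nil)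
  simpa using this

/-- in a connected necklace graph whose underlying cycle has length `h ≥ 9`,
any two vertices are at distance at most `h − 3`. -/
theorem stmt2 {V : Type} [Fintype V] (G : SimpleGraph V) (hconn : G.Connected)
    (h : ℕ) (hh : 9 ≤ h) (v : Fin h → V) (B : Fin h → Finset V)
    (hdec : IsNecklaceDecomp G h v B) :
    ∀ x y : V, G.dist x y ≤ h - 3 := by
  obtain ⟨h3, hinj, hblocks, hint, hcover, hedge⟩ := hdec
  have hpos : 0 < h := by omega
  set v' : ℕ → V := fun n => v ⟨n % h, Nat.mod_lt _ hpos⟩ with hv'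
  have hadj' : ∀ n : ℕ, G.Adj (v' n) (v' (n + 1)) := by
    intro n
    have hcyc := tb_adj (hblocks ⟨n % h, Nat.mod_lt _ hpos⟩)
    have he : cycSucc (⟨n % h, Nat.mod_lt _ hpos⟩ : Fin h)
        = ⟨(n + 1) % h, Nat.mod_lt _ hpos⟩ := by
      apply Fin.ext
      simpa [cycSucc] using Nat.mod_add_mod n h 1
    rw [he] at hcyc
    exact hcyc
  have hstep : ∀ (i d : ℕ), G.dist (v' i) (v' (i + d)) ≤ d := by
    intro i d
    induction d with
    | zero => simp
    | succ d ih =>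
      have htri := hconn.dist_triangle (u := v' i) (v := v' (i + d)) (w := v' (i + d + 1))
      have h1 := adj_dist_le_one (hadj' (i + d))
      have he : i + (d + 1) = i + d + 1 := by omega
      rw [he]
      omega
  have key : ∀ a b : ℕ, a ≤ b → b < h → G.dist (v' a) (v' b) ≤ h / 2 := by
    intro a b hab hb
    rcases le_or_gt (b - a) (h / 2) with hd | hd
    · have := hstep a (b - a)
      rw [show a + (b - a) = b by omega] at this
      exact le_trans this hd
    · have := hstep b (h - (b - a))
      rw [show b + (h - (b - a)) = a + h by omega] at this
      have hv : v' (a + h) = v' a := by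
        apply congrArg v; exact Fin.ext (Nat.add_mod_right a h)
      rw [hv] at this
      rw [SimpleGraph.dist_comm]
      exact this.trans (by omega)
  have hcyc : ∀ i j : Fin h, G.dist (v i) (v j) ≤ h / 2 := by
    intro i j
    have hvi : v' i.1 = v i := congrArg v (Fin.ext (Nat.mod_eq_of_lt i.2))
    have hvj : v' j.1 = v j := congrArg v (Fin.ext (Nat.mod_eq_of_lt j.2))
    rcases le_total i.1 j.1 with hij | hij
    · have := key i.1 j.1 hij j.2
      rwa [hvi, hvj] at this
    · have := key j.1 i.1 hij i.2
      rw [hvi, hvj] at this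
      rwa [SimpleGraph.dist_comm] at this
  have hnear : ∀ x : V, ∃ a : Fin h, G.dist x (v a) ≤ 1 := by
    intro x
    obtain ⟨i, hxB⟩ := hcover x
    rcases tb_near (hblocks i) hxB with hx | hx | hx | hx
    · exact ⟨i, by rw [hx, SimpleGraph.dist_self]; omega⟩
    · exact ⟨cycSucc i, by rw [hx, SimpleGraph.dist_self]; omega⟩
    · exact ⟨i, adj_dist_le_one hx⟩
    · exact ⟨cycSucc i, adj_dist_le_one hx⟩
  intro x y
  obtain ⟨a, hxa⟩ := hnear x
  obtain ⟨b, hyb⟩ := hnear y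
  have t1 := hconn.dist_triangle (u := x) (v := v a) (w := y)
  have t2 := hconn.dist_triangle (u := v a) (v := v b) (w := y)
  have hby : G.dist (v b) y ≤ 1 := by rwa [SimpleGraph.dist_comm]
  have hab := hcyc a b
  omega

end LRW1
end

section
/- Let G be a connected necklace graph with underlying directed cycle C. For every vertex v on C, the graph G − v is a thread graph (i.e., has linear rankwidth at most 1). -/
open scoped Classical

namespace LRW1

/-- GF(2) outer products have rank at most 1. -/
lemma rank_outer_le_one {m n : Type} [Fintype m] [Fintype n]
    (u : m → ZMod 2) (w : n → ZMod 2) :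
    (Matrix.of fun i j => u i * w j : Matrix m n (ZMod 2)).rank ≤ 1 := by
  have hEq : (Matrix.of fun i j => u i * w j : Matrix m n (ZMod 2))
      = Matrix.vecMulVec u w := rfl
  rw [hEq, Matrix.vecMulVec_eq (Fin 1)]
  refine le_trans (Matrix.rank_mul_le_left _ _) ?_
  refine le_trans (Matrix.rank_le_card_width _) ?_
  simp

/-- Arithmetic description of lexicographic comparison of `p*N+q`. -/
lemma lex_lt_iff {N p q p' q' : ℕ} (hq : q < N) (hq' : q' < N) :
    p * N + q < p' * N + q' ↔ (p < p' ∨ (p = p' ∧ q < q')) := by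
  constructor
  · intro hlt
    rcases lt_trichotomy p p' with h1 | h1 | h1
    · exact Or.inl h1
    · subst h1; exact Or.inr ⟨rfl, by omega⟩
    · exfalso
      have h2 : p' * N + N ≤ p * N := by
        have h3 : (p' + 1) * N ≤ p * N := Nat.mul_le_mul_right _ h1
        calc p' * N + N = (p' + 1) * N := by ring
          _ ≤ p * N := h3
      omega
  · rintro (h1 | ⟨h1, h2⟩)
    · have h2 : p * N + N ≤ p' * N := by
        have h3 : (p + 1) * N ≤ p' * N := Nat.mul_le_mul_right _ h1
        calc p * N + N = (p + 1) * N := by ring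
          _ ≤ p' * N := h3
      omega
    · subst h1; omega

open Fin.NatCast

/-- deleting any vertex of the underlying cycle of a connected necklace graph
yields a graph of linear rankwidth at most 1 (a thread graph). -/
theorem stmt3 {V : Type} [Fintype V] (G : SimpleGraph V) (hconn : G.Connected)
    (h : ℕ) (v : Fin h → V) (B : Fin h → Finset V)
    (hdec : IsNecklaceDecomp G h v B) (i : Fin h) :
    LinRankwidthLE (G.induce {x : V | x ≠ v i}) 1 := by
  classical
  obtain ⟨hh3, hvinj, hTB, hint, hcov, hecov⟩ := hdec
  haveI : NeZero h := ⟨by omega⟩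
  choose σB lL lR hlab hfirst hRx hLx hlast hLy hRy hadj using fun j => (hTB j).2.2.2
  have hcard2 : ∀ j, 2 ≤ (B j).card := fun j => (hTB j).1
  have hxmem : ∀ j, v j ∈ B j := fun j => (hTB j).2.1
  have hymem : ∀ j, v (cycSucc j) ∈ B j := fun j => (hTB j).2.2.1
  -- basic Fin facts
  have h1v : ((1 : Fin h) : ℕ) = 1 := by
    rw [Fin.val_one']; exact Nat.mod_eq_of_lt (by omega)
  have hcyc : ∀ j : Fin h, cycSucc j = j + 1 := by
    intro j; apply Fin.ext; simp [cycSucc, Fin.add_def, h1v]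
  have hcast : ∀ p : ℕ, p < h → ((p : Fin h) : ℕ) = p := fun p hp => Fin.val_cast_of_lt hp
  have hcastinj : ∀ p p' : ℕ, p < h → p' < h → (p : Fin h) = (p' : Fin h) → p = p' := by
    intro p p' hp hp' e
    have := congrArg Fin.val e
    rwa [hcast p hp, hcast p' hp'] at this
  -- block intersection facts
  have hint' : ∀ j j' : Fin h, j ≠ j' → ∀ x : V, x ∈ B j → x ∈ B j' →
      (x = v j ∨ x = v (cycSucc j)) ∧ (x = v j' ∨ x = v (cycSucc j')) := by
    intro j j' hne x hx hx'
    have hmem : x ∈ ((B j : Set V) ∩ (B j' : Set V)) := ⟨hx, hx'⟩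
    rw [hint j j' hne] at hmem
    obtain ⟨m1, m2⟩ := hmem
    constructor
    · simpa using m1
    · simpa using m2
  have hvmem : ∀ (j m : Fin h), v j ∈ B m → m = j ∨ j = cycSucc m := by
    intro j m hm
    by_cases hmj : m = j
    · exact Or.inl hmj
    · right
      have := (hint' m j hmj (v j) hm (hxmem j)).1
      rcases this with e | e
      · exact absurd (hvinj e).symm hmj
      · exact hvinj e
  -- path index
  have hex : ∀ x : V, ∃ p : ℕ, p < h ∧ x ∈ B (i + (p : Fin h)) := by
    intro x
    obtain ⟨j, hj⟩ := hcov x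
    refine ⟨((j - i : Fin h) : ℕ), (j - i).isLt, ?_⟩
    rw [Fin.cast_val_eq_self]
    rw [show i + (j - i) = j by rw [add_comm]; exact sub_add_cancel j i]
    exact hj
  let px : V → ℕ := fun x => Nat.find (hex x)
  have hpx_lt : ∀ x, px x < h := fun x => (Nat.find_spec (hex x)).1
  have hpx_mem : ∀ x, x ∈ B (i + (px x : Fin h)) := fun x => (Nat.find_spec (hex x)).2
  have hpx_min : ∀ x p, p < h → x ∈ B (i + (p : Fin h)) → px x ≤ p :=
    fun x p hp hm => Nat.find_min' (hex x) ⟨hp, hm⟩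
  let qx : V → ℕ := fun x => ((σB (i + (px x : Fin h))) ⟨x, hpx_mem x⟩ : ℕ)
  have hqx_spec : ∀ (x : V) (p : ℕ) (hm : x ∈ B (i + (p : Fin h))),
      px x = p → qx x = ((σB (i + (p : Fin h))) ⟨x, hm⟩ : ℕ) := by
    intro x p hm e
    subst e; rfl
  let N : ℕ := Fintype.card V + 1
  have hq_lt : ∀ x, qx x < N := by
    intro x
    have h1 : qx x < (B (i + (px x : Fin h))).card := ((σB _) ⟨x, hpx_mem x⟩).isLt
    have h2 : (B (i + (px x : Fin h))).card ≤ Fintype.card V := Finset.card_le_univ _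
    omega
  let κ : V → ℕ := fun x => px x * N + qx x
  have hκ : ∀ x, κ x = px x * N + qx x := fun _ => rfl
  -- L1
  have L1 : ∀ (x : V) (pp : ℕ), pp < h → x ≠ v i → x ∈ B (i + (pp : Fin h)) →
      px x = pp ∨ (px x + 1 = pp ∧ x = v (i + (pp : Fin h))) := by
    intro x pp hpp hxvi hmem
    have hminle : px x ≤ pp := hpx_min x pp hpp hmem
    by_cases e : px x = pp
    · exact Or.inl e
    · right
      have hlt : px x < pp := lt_of_le_of_ne hminle e
      have hjne : i + ((px x : ℕ) : Fin h) ≠ i + ((pp : ℕ) : Fin h) := by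
        intro ee
        exact e (hcastinj _ _ (hpx_lt x) hpp (add_left_cancel ee))
      have hI := (hint' _ _ hjne x (hpx_mem x) hmem).1
      rcases hI with e1 | e1
      · -- x = v (i + px x), so i + px x must be i + pp or its cycSucc
        exfalso
        have hv2 : v (i + ((px x : ℕ) : Fin h)) ∈ B (i + ((pp : ℕ) : Fin h)) := by
          rw [← e1]; exact hmem
        rcases hvmem _ _ hv2 with e2 | e2
        · exact hjne e2.symm
        · rw [hcyc] at e2
          have e3 : ((px x : ℕ) : Fin h) = ((pp : ℕ) : Fin h) + 1 := by
            have := e2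
            rwa [add_assoc, add_right_inj] at this
          have e4 : px x = (pp + 1) % h := by
            have := congrArg Fin.val e3
            rw [hcast _ (hpx_lt x), Fin.add_def, hcast _ hpp, h1v] at this
            exact this
          rcases Nat.lt_or_ge (pp + 1) h with hc | hc
          · rw [Nat.mod_eq_of_lt hc] at e4; omega
          · have : pp + 1 = h := by omega
            rw [this, Nat.mod_self] at e4
            apply hxvi
            rw [e1, e4]
            simp
      · -- x = v (i + px x + 1)
        rw [hcyc] at e1
        have hv2 : v (i + ((px x : ℕ) : Fin h) + 1) ∈ B (i + ((pp : ℕ) : Fin h)) := by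
          rw [← e1]; exact hmem
        rcases hvmem _ _ hv2 with e2 | e2
        · -- i + pp = i + px x + 1
          have e3 : ((pp : ℕ) : Fin h) = ((px x : ℕ) : Fin h) + 1 := by
            rw [add_assoc] at e2
            exact add_left_cancel e2
          have e4 : pp = (px x + 1) % h := by
            have := congrArg Fin.val e3
            rw [hcast _ hpp, Fin.add_def, hcast _ (hpx_lt x), h1v] at this
            exact this
          have e5 : pp = px x + 1 := by
            rw [Nat.mod_eq_of_lt (by omega)] at e4; exact e4
          refine ⟨e5.symm, ?_⟩
          rw [e1, e5]
          congr 1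
          rw [Nat.cast_add, Nat.cast_one, add_assoc]
        · -- i + px x + 1 = cycSucc (i + pp) = i + pp + 1
          exfalso
          rw [hcyc] at e2
          have e3 : ((px x : ℕ) : Fin h) = ((pp : ℕ) : Fin h) := by
            have := e2
            rw [add_assoc, add_assoc] at this
            have := add_left_cancel this
            exact add_right_cancel this
          exact e (hcastinj _ _ (hpx_lt x) hpp e3)
  -- L2
  have L2 : ∀ (pp : ℕ), pp < h → ∀ (z : V) (hm : z ∈ B (i + (pp : Fin h))), z ≠ v i →
      (px z = pp ∧ qx z = ((σB (i + (pp : Fin h))) ⟨z, hm⟩ : ℕ)) ∨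
      (px z + 1 = pp ∧ ((σB (i + (pp : Fin h))) ⟨z, hm⟩ : ℕ) = 0) := by
    intro pp hpp z hm hzvi
    rcases L1 z pp hpp hzvi hm with e | ⟨e1, e2⟩
    · exact Or.inl ⟨e, hqx_spec z pp hm e⟩
    · refine Or.inr ⟨e1, ?_⟩
      have hsub : (⟨z, hm⟩ : ↥(B (i + (pp : Fin h)))) =
          ⟨v (i + (pp : Fin h)), by rw [← e2]; exact hm⟩ := Subtype.ext e2
      rw [hsub]
      exact hfirst (i + (pp : Fin h)) _
  -- L3 (monotonicity)
  have L3 : ∀ (pp : ℕ), pp < h → ∀ (x y : V) (hmx : x ∈ B (i + (pp : Fin h)))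
      (hmy : y ∈ B (i + (pp : Fin h))), x ≠ v i → y ≠ v i →
      ((σB (i + (pp : Fin h))) ⟨x, hmx⟩ : ℕ) < ((σB (i + (pp : Fin h))) ⟨y, hmy⟩ : ℕ) →
      κ x < κ y := by
    intro pp hpp x y hmx hmy hxvi hyvi hσ
    rcases L2 pp hpp y hmy hyvi with ⟨ey1, ey2⟩ | ⟨ey1, ey2⟩
    · rcases L2 pp hpp x hmx hxvi with ⟨ex1, ex2⟩ | ⟨ex1, ex2⟩
      · -- both normal
        have hx' := hκ x; have hy' := hκ y
        rw [ex1] at hx'; rw [ey1] at hy'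
        omega
      · -- x special, y normal
        have hx' := hκ x; have hy' := hκ y
        rw [ey1] at hy'
        have hqx : qx x < N := hq_lt x
        have e : px x * N + N = pp * N := by
          rw [← ex1]; ring
        omega
    · -- y is the first vertex: σ y = 0, contradiction
      omega
  -- L4
  have L4 : ∀ (pp : ℕ), pp < h → ∀ (x y : V) (hmx : x ∈ B (i + (pp : Fin h)))
      (hmy : y ∈ B (i + (pp : Fin h))), x ≠ v i → y ≠ v i → κ x < κ y →
      ((σB (i + (pp : Fin h))) ⟨x, hmx⟩ : ℕ) < ((σB (i + (pp : Fin h))) ⟨y, hmy⟩ : ℕ) := by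
    intro pp hpp x y hmx hmy hx hy hκlt
    rcases lt_trichotomy ((σB (i + (pp : Fin h))) ⟨x, hmx⟩ : ℕ)
      ((σB (i + (pp : Fin h))) ⟨y, hmy⟩ : ℕ) with hc | hc | hc
    · exact hc
    · exfalso
      have : (⟨x, hmx⟩ : ↥(B (i + (pp : Fin h)))) = ⟨y, hmy⟩ :=
        (σB _).injective (Fin.ext hc)
      have exy : x = y := congrArg Subtype.val this
      rw [exy] at hκlt; omega
    · exact absurd (L3 pp hpp y x hmy hmx hy hx hc) (by omega)
  -- κ is injective away from nothing
  have kinj : ∀ x y : V, κ x = κ y → x = y := by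
    intro x y e
    have epx : px x = px y := by
      rcases lt_trichotomy (px x) (px y) with hc | hc | hc
      · have := (lex_lt_iff (hq_lt x) (hq_lt y)).2 (Or.inl hc)
        rw [← hκ x, ← hκ y] at this; omega
      · exact hc
      · have := (lex_lt_iff (hq_lt y) (hq_lt x)).2 (Or.inl hc)
        rw [← hκ x, ← hκ y] at this; omega
    have eqx : qx x = qx y := by
      have ex := hκ x; have ey := hκ y
      rw [epx] at ex; omega
    have hmy : y ∈ B (i + (px x : Fin h)) := by rw [epx]; exact hpx_mem y
    have e1 : qx x = ((σB (i + (px x : Fin h))) ⟨x, hpx_mem x⟩ : ℕ) := rfl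
    have e2 : qx y = ((σB (i + (px x : Fin h))) ⟨y, hmy⟩ : ℕ) :=
      hqx_spec y (px x) hmy epx.symm
    have : (⟨x, hpx_mem x⟩ : ↥(B (i + (px x : Fin h)))) = ⟨y, hmy⟩ :=
      (σB _).injective (Fin.ext (by omega))
    exact congrArg Subtype.val this
  -- linear order on the vertex set minus v i
  have kinj' : Function.Injective (fun x : ↥{x : V | x ≠ v i} => κ x.1) :=
    fun x y e => Subtype.ext (kinj _ _ e)
  letI lord : LinearOrder ↥{x : V | x ≠ v i} := LinearOrder.lift' _ kinj'
  have hle : ∀ x y : ↥{x : V | x ≠ v i}, x ≤ y ↔ κ x.1 ≤ κ y.1 := fun _ _ => Iff.rfl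
  -- main cut lemma
  have key : ∀ S : Set ↥{x : V | x ≠ v i},
      (∀ x y : ↥{x : V | x ≠ v i}, y ≤ x → x ∈ S → y ∈ S) →
      cutRank (G.induce {x : V | x ≠ v i}) S ≤ 1 := by
    intro S hlow
    unfold cutRank
    by_cases hne : (Sᶜ).Nonempty
    swap
    · refine le_trans (Matrix.rank_le_card_width _) ?_
      have hempty : Sᶜ = ∅ := Set.not_nonempty_iff_eq_empty.1 hne
      simp [hempty]
    obtain ⟨b0, hb0, hb0min⟩ := Set.exists_min_image Sᶜ (fun x => κ x.1) (Set.toFinite _) hne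
    set p : ℕ := px b0.1 with hpdef
    have hp : p < h := hpx_lt _
    set j : Fin h := i + (p : Fin h) with hj
    have hb0mem : b0.1 ∈ B j := hpx_mem b0.1
    have hqb0 : qx b0.1 = ((σB j) ⟨b0.1, hb0mem⟩ : ℕ) := rfl
    have hSlt : ∀ a ∈ S, κ a.1 < κ b0.1 := by
      intro a ha
      by_contra hcon
      have hba : b0 ≤ a := (hle b0 a).2 (by omega)
      exact hb0 (hlow a b0 hba ha)
    have hchar : ∀ (a b : ↥{x : V | x ≠ v i}), a ∈ S → b ∈ Sᶜ →
        (G.Adj a.1 b.1 ↔ ((a.1 ∈ B j ∧ lR j a.1) ∧ (b.1 ∈ B j ∧ lL j b.1))) := by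
      intro a b ha hb
      have hab0 : κ a.1 < κ b0.1 := hSlt a ha
      have hb0b : κ b0.1 ≤ κ b.1 := hb0min b hb
      have hpxa : px a.1 ≤ p := by
        have hlex := (lex_lt_iff (hq_lt a.1) (hq_lt b0.1)).1 hab0
        rcases hlex with hlt | ⟨heq, _⟩
        · exact le_of_lt hlt
        · exact le_of_eq heq
      have hpb : p ≤ px b.1 := by
        by_contra hcon
        have : κ b.1 < κ b0.1 :=
          (lex_lt_iff (hq_lt b.1) (hq_lt b0.1)).2 (Or.inl (by omega))
        omega
      constructor
      · intro hAdj
        obtain ⟨m, hma, hmb⟩ := hecov a.1 b.1 hAdj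
        have hpmlt : ((m - i : Fin h) : ℕ) < h := (m - i).isLt
        have hmeq : i + ((((m - i : Fin h) : ℕ) : ℕ) : Fin h) = m := by
          rw [Fin.cast_val_eq_self, add_comm]; exact sub_add_cancel m i
        set pm : ℕ := ((m - i : Fin h) : ℕ) with hpmdef
        rw [← hmeq] at hma hmb
        have hpxb : px b.1 ≤ pm := hpx_min _ _ hpmlt hmb
        have hmain : pm = p → ((a.1 ∈ B j ∧ lR j a.1) ∧ (b.1 ∈ B j ∧ lL j b.1)) := by
          intro hpmp
          rw [hpmp] at hma hmb
          have hκab : κ a.1 < κ b.1 := lt_of_lt_of_le hab0 hb0b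
          have hσ := L4 p hp a.1 b.1 hma hmb a.2 b.2 hκab
          have hiff := hadj j ⟨a.1, hma⟩ ⟨b.1, hmb⟩ hσ
          have hlab' := hiff.1 hAdj
          exact ⟨⟨hma, hlab'.1⟩, ⟨hmb, hlab'.2⟩⟩
        rcases L1 a.1 pm hpmlt a.2 hma with e | ⟨e1, e2⟩
        · exact hmain (by omega)
        · by_cases hpmp : pm = p
          · exact hmain hpmp
          · exfalso
            have h5 : p = px a.1 := by omega
            have hjpm : i + ((pm : ℕ) : Fin h) = cycSucc j := by
              rw [hcyc]
              have e3 : ((pm : ℕ) : Fin h) = ((p : ℕ) : Fin h) + 1 := by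
                rw [show pm = p + 1 by omega, Nat.cast_add, Nat.cast_one]
              rw [e3, hj, add_assoc]
            have ha_last : a.1 = v (cycSucc j) := by rw [← hjpm]; exact e2
            have hamem : a.1 ∈ B j := by rw [ha_last]; exact hymem j
            have hqa : qx a.1 = ((σB j) ⟨a.1, hamem⟩ : ℕ) := hqx_spec a.1 p hamem h5.symm
            have hσa : ((σB j) ⟨a.1, hamem⟩ : ℕ) = (B j).card - 1 := by
              have hsub : (⟨a.1, hamem⟩ : ↥(B j)) = ⟨v (cycSucc j), hymem j⟩ :=
                Subtype.ext ha_last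
              rw [hsub]; exact hlast j _
            have hb0lt : ((σB j) ⟨b0.1, hb0mem⟩ : ℕ) < (B j).card :=
              ((σB j) ⟨b0.1, hb0mem⟩).isLt
            have hκa : κ a.1 = px a.1 * N + qx a.1 := rfl
            have hκb0 : κ b0.1 = p * N + qx b0.1 := rfl
            rw [← h5] at hκa
            rw [hqa, hσa] at hκa
            rw [hqb0] at hκb0
            have hc2 : 2 ≤ (B j).card := hcard2 j
            omega
      · rintro ⟨⟨hma', hra⟩, ⟨hmb', hlb⟩⟩
        have hκab : κ a.1 < κ b.1 := lt_of_lt_of_le hab0 hb0b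
        have hσ := L4 p hp a.1 b.1 hma' hmb' a.2 b.2 hκab
        exact (hadj j ⟨a.1, hma'⟩ ⟨b.1, hmb'⟩ hσ).2 ⟨hra, hlb⟩
    have hM : (Matrix.of fun (a : ↥S) (b : ↥(Sᶜ)) =>
        if (G.induce {x : V | x ≠ v i}).Adj a.1 b.1 then (1 : ZMod 2) else 0) =
        Matrix.of fun (a : ↥S) (b : ↥(Sᶜ)) =>
          (if a.1.1 ∈ B j ∧ lR j a.1.1 then (1 : ZMod 2) else 0) *
          (if b.1.1 ∈ B j ∧ lL j b.1.1 then (1 : ZMod 2) else 0) := by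
      ext a b
      simp only [Matrix.of_apply]
      have hadj' : (G.induce {x : V | x ≠ v i}).Adj a.1 b.1 ↔ G.Adj a.1.1 b.1.1 := by
        simp [SimpleGraph.comap_adj]
      have hc := hchar a.1 b.1 a.2 b.2
      by_cases hA : G.Adj a.1.1 b.1.1
      · obtain ⟨hx1, hx2⟩ := hc.1 hA
        rw [if_pos (hadj'.2 hA), if_pos hx1, if_pos hx2, one_mul]
      · rw [if_neg (fun hh => hA (hadj'.1 hh))]
        by_cases h1 : (a.1.1 ∈ B j ∧ lR j a.1.1)
        · have h2 : ¬(b.1.1 ∈ B j ∧ lL j b.1.1) := fun h2 => hA (hc.2 ⟨h1, h2⟩)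
          rw [if_neg h2, mul_zero]
        · rw [if_neg h1, zero_mul]
    exact le_trans (le_of_eq (by convert congrArg Matrix.rank hM)) (rank_outer_le_one _ _)
  -- conclude
  refine ⟨(monoEquivOfFin ↥{x : V | x ≠ v i} rfl).symm.toEquiv, ?_⟩
  intro t
  apply key
  intro x y hyx hx
  have : (monoEquivOfFin ↥{x : V | x ≠ v i} rfl).symm y ≤
      (monoEquivOfFin ↥{x : V | x ≠ v i} rfl).symm x := by
    exact (OrderIso.le_iff_le _).2 hyx
  simp only [Set.mem_setOf_eq] at hx ⊢
  exact lt_of_le_of_lt (Nat.le_of_succ_le_succ (Nat.succ_le_of_lt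
    (Nat.lt_succ_of_le this))) hx

end LRW1
end

section
/- Let G be a connected thread graph with canonical thread decomposition G = P ⊙ {B₁,...,B_{n−1}} over the directed path P = v₁⋯v_n, n ≥ 3. Then each of v₂,...,v_{n−1} is a cut vertex of G, and conversely every cut vertex of G lies on P. -/
open scoped Classical

namespace LRW1

/-- A canonical thread block: additionally, the second vertex is not labelled `{L}`
(equivalently, it carries the label `R`) unless the block has exactly 2 vertices. -/
def IsCanonicalThreadBlock {V : Type} (G : SimpleGraph V) (B : Finset V) (x y : V) : Prop :=
  2 ≤ B.card ∧ x ∈ B ∧ y ∈ B ∧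
  ∃ (σ : ↥B ≃ Fin B.card) (lL lR : V → Prop),
    (∀ v : ↥B, lL v.1 ∨ lR v.1) ∧
    (∀ hx : x ∈ B, (σ ⟨x, hx⟩ : ℕ) = 0) ∧ lR x ∧ ¬ lL x ∧
    (∀ hy : y ∈ B, (σ ⟨y, hy⟩ : ℕ) = B.card - 1) ∧ lL y ∧ ¬ lR y ∧
    (∀ v w : ↥B, (σ v : ℕ) < (σ w : ℕ) → (G.Adj v.1 w.1 ↔ (lR v.1 ∧ lL w.1))) ∧
    (B.card ≠ 2 → ∀ u : ↥B, (σ u : ℕ) = 1 → lR u.1)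

/-- A canonical thread decomposition `G = P ⊙ 𝓑` over the directed path
`P = v 0, …, v n` (so `n` blocks), all blocks being canonical. -/
def IsCanonicalThreadDecomp {V : Type} (G : SimpleGraph V) (n : ℕ)
    (v : Fin (n+1) → V) (B : Fin n → Finset V) : Prop :=
  Function.Injective v ∧
  (∀ i : Fin n, IsCanonicalThreadBlock G (B i) (v i.castSucc) (v i.succ)) ∧
  (∀ i j : Fin n, i ≠ j →
    ((B i : Set V) ∩ (B j : Set V)) =
      (({v i.castSucc, v i.succ} : Set V) ∩ ({v j.castSucc, v j.succ} : Set V))) ∧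
  (∀ a : V, ∃ i : Fin n, a ∈ B i) ∧
  (∀ a b : V, G.Adj a b → ∃ i : Fin n, a ∈ B i ∧ b ∈ B i)

/-- `w` is a cut vertex: its removal disconnects the (connected) graph. -/
def IsCutVertex {V : Type} (G : SimpleGraph V) (w : V) : Prop :=
  (∃ x : V, x ≠ w) ∧ ¬ (G.induce {x : V | x ≠ w}).Connected

/-- in a connected thread graph with a canonical thread decomposition over the
directed path `v 0, …, v n` with `n ≥ 2`, the internal path vertices `v 1, …, v (n-1)` are
cut vertices, and conversely every cut vertex lies on the path. -/
theorem stmt6 {V : Type} [Fintype V] (G : SimpleGraph V) (hconn : G.Connected)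
    (n : ℕ) (hn : 2 ≤ n) (v : Fin (n+1) → V) (B : Fin n → Finset V)
    (hdec : IsCanonicalThreadDecomp G n v B) :
    (∀ i : Fin (n+1), i.1 ≠ 0 → i.1 ≠ n → IsCutVertex G (v i)) ∧
    (∀ w : V, IsCutVertex G w → ∃ i : Fin (n+1), w = v i) := by
  obtain ⟨hinj, hblocks, hmerge, hcover, hedge⟩ := hdec
  -- the path edges are present
  have hpathadj : ∀ i : Fin n, G.Adj (v i.castSucc) (v i.succ) := by
    intro i
    obtain ⟨hcard, hx, hy, σ, lL, lR, hor, hσx, hlRx, hnlLx, hσy, hlLy, hnlRy, hadj, hcanon⟩ :=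
      hblocks i
    have h0 : (σ ⟨_, hx⟩ : ℕ) < (σ ⟨_, hy⟩ : ℕ) := by
      rw [hσx hx, hσy hy]; omega
    exact (hadj _ _ h0).2 ⟨hlRx, hlLy⟩
  have hxmem : ∀ i : Fin n, v i.castSucc ∈ B i := fun i => (hblocks i).2.1
  have hymem : ∀ i : Fin n, v i.succ ∈ B i := fun i => (hblocks i).2.2.1
  -- every vertex of a block is an endpoint or adjacent to an endpoint
  have hblockv : ∀ (i : Fin n) (a : V), a ∈ B i →
      a = v i.castSucc ∨ a = v i.succ ∨ G.Adj a (v i.castSucc) ∨ G.Adj a (v i.succ) := by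
    intro i a ha
    obtain ⟨hcard, hx, hy, σ, lL, lR, hor, hσx, hlRx, hnlLx, hσy, hlLy, hnlRy, hadj, hcanon⟩ :=
      hblocks i
    by_cases h0 : (σ ⟨a, ha⟩ : ℕ) = 0
    · left
      have h1 : σ ⟨a, ha⟩ = σ ⟨_, hx⟩ := Fin.ext (by rw [hσx hx]; exact h0)
      exact congrArg Subtype.val (σ.injective h1)
    by_cases h1 : (σ ⟨a, ha⟩ : ℕ) = (B i).card - 1
    · right; left
      have h2 : σ ⟨a, ha⟩ = σ ⟨_, hy⟩ := Fin.ext (by rw [hσy hy]; exact h1)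
      exact congrArg Subtype.val (σ.injective h2)
    · right; right
      rcases hor ⟨a, ha⟩ with hL | hR
      · left
        have hlt : (σ ⟨_, hx⟩ : ℕ) < (σ ⟨a, ha⟩ : ℕ) := by rw [hσx hx]; omega
        exact ((hadj _ _ hlt).2 ⟨hlRx, hL⟩).symm
      · right
        have hlt : (σ ⟨a, ha⟩ : ℕ) < (σ ⟨_, hy⟩ : ℕ) := by
          have hb := (σ ⟨a, ha⟩).2
          rw [hσy hy]; omega
        exact (hadj _ _ hlt).2 ⟨hR, hlLy⟩
  constructor
  · -- internal path vertices are cut vertices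
    intro i hi0 hin
    have hi1 : (i : ℕ) < n := lt_of_le_of_ne (Nat.lt_succ_iff.mp i.2) hin
    constructor
    · refine ⟨v ⟨0, by omega⟩, fun h => hi0 ?_⟩
      have := hinj h
      have := congrArg Fin.val this
      simpa using this.symm
    · intro hconn'
      set S : Set V := {a | ∃ j : Fin n, (j : ℕ) < (i : ℕ) ∧ a ∈ B j} with hS
      -- adjacency (avoiding v i) preserves membership in S
      have key : ∀ a b : {x : V | x ≠ v i}, (G.induce {x : V | x ≠ v i}).Adj a b →
          a.1 ∈ S → b.1 ∈ S := by
        intro a b hab haS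
        have hGab : G.Adj a.1 b.1 := hab
        obtain ⟨j, haj, hbj⟩ := hedge a.1 b.1 hGab
        by_cases hj : (j : ℕ) < (i : ℕ)
        · exact ⟨j, hj, hbj⟩
        · exfalso
          obtain ⟨j', hj', haj'⟩ := haS
          have hne : j' ≠ j := by
            intro h; rw [h] at hj'; omega
          have hint : a.1 ∈ ((B j' : Set V) ∩ (B j : Set V)) := ⟨haj', haj⟩
          rw [hmerge j' j hne] at hint
          obtain ⟨h1, h2⟩ := hint
          simp only [Set.mem_insert_iff, Set.mem_singleton_iff] at h1 h2
          have hvi : a.1 ≠ v i := a.2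
          rcases h1 with h1 | h1 <;> rcases h2 with h2 | h2
          · have := congrArg Fin.val (hinj (h1.symm.trans h2))
            simp at this; omega
          · have := congrArg Fin.val (hinj (h1.symm.trans h2))
            simp at this; omega
          · have he := congrArg Fin.val (hinj (h1.symm.trans h2))
            simp at he
            -- j'.1 + 1 = j.1, and j'.1 < i.1 ≤ j.1 forces i.1 = j'.1 + 1
            have hieq : i = j'.succ := Fin.ext (by simp; omega)
            exact hvi (h1.trans (congrArg v hieq.symm))
          · have := congrArg Fin.val (hinj (h1.symm.trans h2))
            simp at this; omega
      have hv0S : v 0 ∈ S := by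
        refine ⟨⟨0, by omega⟩, by simpa using Nat.pos_of_ne_zero hi0, ?_⟩
        have h := hxmem ⟨0, by omega⟩
        have : (⟨0, by omega⟩ : Fin n).castSucc = (0 : Fin (n+1)) := Fin.ext (by simp)
        rwa [this] at h
      have hvnS : v (Fin.last n) ∉ S := by
        rintro ⟨j', hj', hmem⟩
        have hjl : j' ≠ ⟨n-1, by omega⟩ := by
          intro h
          have := congrArg Fin.val h
          simp at this; omega
        have hmem2 : v (Fin.last n) ∈ B (⟨n-1, by omega⟩ : Fin n) := by
          have h := hymem ⟨n-1, by omega⟩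
          have he : (⟨n-1, by omega⟩ : Fin n).succ = Fin.last n := Fin.ext (by simp; omega)
          rwa [he] at h
        have hint : v (Fin.last n) ∈ ((B j' : Set V) ∩ (B (⟨n-1, by omega⟩ : Fin n) : Set V)) :=
          ⟨hmem, hmem2⟩
        rw [hmerge _ _ hjl] at hint
        obtain ⟨h1, -⟩ := hint
        simp only [Set.mem_insert_iff, Set.mem_singleton_iff] at h1
        rcases h1 with h1 | h1
        · have := congrArg Fin.val (hinj h1)
          simp [Fin.val_last] at this; omega
        · have := congrArg Fin.val (hinj h1)
          simp [Fin.val_last] at this; omega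
      have h0ne : v 0 ≠ v i := by
        intro h
        have := congrArg Fin.val (hinj h)
        simp at this; exact hi0 this.symm
      have hnne : v (Fin.last n) ≠ v i := by
        intro h
        have := congrArg Fin.val (hinj h)
        simp [Fin.val_last] at this; omega
      obtain ⟨p⟩ := hconn'.preconnected ⟨v 0, h0ne⟩ ⟨v (Fin.last n), hnne⟩
      have hres : ∀ {a b : {x : V | x ≠ v i}},
          (G.induce {x : V | x ≠ v i}).Walk a b → a.1 ∈ S → b.1 ∈ S := by
        intro a b p
        induction p with
        | nil => exact id
        | cons h p ih => exact fun ha => ih (key _ _ h ha)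
      exact hvnS (hres p hv0S)
  · -- every cut vertex lies on the path
    intro w hw
    by_contra hnw
    push_neg at hnw
    obtain ⟨⟨x0, hx0⟩, hnc⟩ := hw
    apply hnc
    have hne' : ∀ k : Fin (n+1), v k ∈ {x : V | x ≠ w} := fun k h => hnw k h.symm
    -- all path vertices are reachable from v 0 in G - w
    have hreachv : ∀ m : ℕ, ∀ hm : m ≤ n,
        (G.induce {x : V | x ≠ w}).Reachable ⟨v ⟨m, by omega⟩, hne' _⟩ ⟨v ⟨0, by omega⟩, hne' _⟩ := by
      intro m
      induction m with
      | zero => intro _; exact SimpleGraph.Reachable.refl _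
      | succ m ih =>
        intro hm
        have hm' : m ≤ n := by omega
        have hadj : (G.induce {x : V | x ≠ w}).Adj ⟨v ⟨m+1, by omega⟩, hne' _⟩
            ⟨v ⟨m, by omega⟩, hne' _⟩ := by
          have h := hpathadj ⟨m, by omega⟩
          have e1 : (⟨m, by omega⟩ : Fin n).castSucc = (⟨m, by omega⟩ : Fin (n+1)) :=
            Fin.ext (by simp)
          have e2 : (⟨m, by omega⟩ : Fin n).succ = (⟨m+1, by omega⟩ : Fin (n+1)) :=
            Fin.ext (by simp)
          rw [e1, e2] at h
          exact h.symm
        exact hadj.reachable.trans (ih hm')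
    -- every surviving vertex reaches v 0
    have hreachall : ∀ a : {x : V | x ≠ w},
        (G.induce {x : V | x ≠ w}).Reachable a ⟨v ⟨0, by omega⟩, hne' _⟩ := by
      intro a
      obtain ⟨i, hai⟩ := hcover a.1
      have hto : ∀ k : Fin (n+1), a.1 = v k →
          (G.induce {x : V | x ≠ w}).Reachable a ⟨v ⟨0, by omega⟩, hne' _⟩ := by
        intro k hk
        have ha' : a = ⟨v ⟨(k : ℕ), by omega⟩, hne' _⟩ :=
          Subtype.ext (hk.trans (congrArg v (Fin.ext rfl)))
        rw [ha']
        exact hreachv (k : ℕ) (by omega)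
      have hadjto : ∀ k : Fin (n+1), G.Adj a.1 (v k) →
          (G.induce {x : V | x ≠ w}).Reachable a ⟨v ⟨0, by omega⟩, hne' _⟩ := by
        intro k hk
        have hadj : (G.induce {x : V | x ≠ w}).Adj a ⟨v k, hne' _⟩ := hk
        refine hadj.reachable.trans ?_
        have he : (⟨(k : ℕ), by omega⟩ : Fin (n+1)) = k := Fin.ext rfl
        have := hreachv (k : ℕ) (by omega)
        rwa [he] at this
      rcases hblockv i a.1 hai with h | h | h | h
      · exact hto _ h
      · exact hto _ h
      · exact hadjto _ h
      · exact hadjto _ h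
    rw [SimpleGraph.connected_iff]
    refine ⟨fun a b => (hreachall a).trans (hreachall b).symm, ⟨⟨v ⟨0, by omega⟩, hne' _⟩⟩⟩

end LRW1
end

section
/- Let 𝓕 be a family of subsets of a set U, and suppose F₁,...,F_{k+2} ∈ 𝓕 form a sunflower with core Y (pairwise intersections all equal Y) where each F_i \setminus Y is nonempty. Then for every set X ⊆ U with |X| ≤ k that hits every member of 𝓕 \ {F_{k+2}} (i.e., intersects each such member), X also hits F_{k+2}. Consequently, X is a hitting set of 𝓕 if and only if X is a hitting set of 𝓕 \ {F_{k+2}}. -/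
namespace LRW1

/-- if `f 0, …, f (k+1)` are `k+2` distinct members of `𝓕` forming a
sunflower with core `Y` and nonempty petals, then every set `X` of at most `k` elements
hitting all members of `𝓕` other than the last sunflower member also hits that member;
consequently `X` is a hitting set of `𝓕` iff it hits `𝓕` minus that member. -/
theorem stmt15 {U : Type} (F : Set (Set U)) (k : ℕ) (Y : Set U)
    (f : Fin (k + 2) → Set U) (hmem : ∀ i, f i ∈ F) (hinj : Function.Injective f)
    (hcore : ∀ i j, i ≠ j → f i ∩ f j = Y)
    (hpet : ∀ i, (f i \ Y).Nonempty)
    (X : Finset U) (hX : X.card ≤ k) :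
    ((∀ A ∈ F, A ≠ f (Fin.last (k + 1)) → ((↑X : Set U) ∩ A).Nonempty) →
      ((↑X : Set U) ∩ f (Fin.last (k + 1))).Nonempty) ∧
    ((∀ A ∈ F, ((↑X : Set U) ∩ A).Nonempty) ↔
      (∀ A ∈ F, A ≠ f (Fin.last (k + 1)) → ((↑X : Set U) ∩ A).Nonempty)) := by
  have key : (∀ A ∈ F, A ≠ f (Fin.last (k + 1)) → ((↑X : Set U) ∩ A).Nonempty) →
      ((↑X : Set U) ∩ f (Fin.last (k + 1))).Nonempty := by
    intro h
    by_contra hc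
    have hXY : ∀ x ∈ X, x ∉ Y := by
      intro x hx hxY
      apply hc
      have hsub : Y ⊆ f (Fin.last (k + 1)) := by
        rw [← hcore 0 (Fin.last (k + 1)) (by simp [Fin.ext_iff])]
        exact Set.inter_subset_right
      exact ⟨x, hx, hsub hxY⟩
    have hsel : ∀ i : Fin (k + 1), ∃ x : X, (x : U) ∈ f i.castSucc := by
      intro i
      obtain ⟨x, hxX, hxA⟩ := h (f i.castSucc) (hmem _)
        (fun he => absurd (hinj he) (Fin.castSucc_lt_last i).ne)
      exact ⟨⟨x, hxX⟩, hxA⟩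
    choose g hg using hsel
    have hginj : Function.Injective g := by
      intro i j hij
      by_contra hne
      have hx : (g i : U) ∈ f i.castSucc ∩ f j.castSucc := ⟨hg i, hij ▸ hg j⟩
      rw [hcore _ _ (by simpa using (Fin.castSucc_injective _).ne hne)] at hx
      exact hXY _ (g i).2 hx
    have hcard := Fintype.card_le_of_injective g hginj
    simp [Fintype.card_coe] at hcard
    omega
  refine ⟨key, ⟨fun h A hA _ => h A hA, fun h A hA => ?_⟩⟩
  by_cases hA' : A = f (Fin.last (k + 1))
  · exact hA' ▸ key h
  · exact h A hA hA'

end LRW1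
end

section
/- Let G be a connected graph that contains no induced subgraph isomorphic to any member of Ω_N and is not a thread graph. If C is a shortest induced cycle of length at least 9 in G and v is any vertex of G, then every two neighbors of v in G − v are at distance at most 2 in G − v, provided G − v is a necklace graph with underlying cycle C. -/
open scoped Classical

namespace LRW1

/-! ### Auxiliary lemmas -/

section WalkAux
open SimpleGraph

lemma exists_walk_getVert {V : Type} {G : SimpleGraph V} :
    ∀ {x y : V} (W : G.Walk x y) {i j : ℕ}, i ≤ j →
      ∃ P : G.Walk (W.getVert i) (W.getVert j), P.length ≤ j - i := by
  intro x y W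
  induction W with
  | nil => intro i j _; exact ⟨Walk.nil, by simp⟩
  | @cons u u' w hadj q ih =>
    intro i j hij
    match i, j with
    | 0, 0 => exact ⟨Walk.nil, by simp⟩
    | 0, (j+1) =>
      obtain ⟨P, hP⟩ := ih (Nat.zero_le j)
      refine ⟨Walk.cons hadj (P.copy (q.getVert_zero) rfl), ?_⟩
      have hl : (Walk.cons hadj (P.copy (q.getVert_zero) rfl)).length = P.length + 1 := by
        rw [Walk.length_cons, Walk.length_copy]
      exact hl.trans_le (by omega)
    | (i+1), (j+1) =>
      obtain ⟨P, hP⟩ := ih (Nat.succ_le_succ_iff.mp hij)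
      exact ⟨P, by simpa using hP⟩

lemma dist_getVert_lower {V : Type} {G : SimpleGraph V} {x y : V} (W : G.Walk x y)
    (hW : W.length = G.dist x y) {i j : ℕ} (hij : i ≤ j) (hj : j ≤ W.length)
    (Q : G.Walk (W.getVert i) (W.getVert j)) : j - i ≤ Q.length := by
  obtain ⟨P1, hP1⟩ := exists_walk_getVert W (Nat.zero_le i)
  obtain ⟨P3, hP3⟩ := exists_walk_getVert W hj
  have hd := SimpleGraph.dist_le
    ((P1.copy (W.getVert_zero) rfl).append (Q.append (P3.copy rfl (W.getVert_length))))
  simp only [Walk.length_append, Walk.length_copy] at hd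
  omega

end WalkAux

section CombAux
open SimpleGraph
variable {V : Type} (G : SimpleGraph V) (v : V) (p : ℕ → V) (a b : ℕ)

lemma nonzeroRow
    (hab : a + 3 ≤ b)
    (hpv : ∀ t, a ≤ t → t ≤ b → p t ≠ v)
    (hinj : ∀ s t, a ≤ s → s < t → t ≤ b → p s ≠ p t)
    (hadj : ∀ s t, a ≤ s → s ≤ b → a ≤ t → t ≤ b → (G.Adj (p s) (p t) ↔ (s + 1 = t ∨ t + 1 = s)))
    (hva : G.Adj v (p a)) (hvb : G.Adj v (p b)) :
    ∀ u ∈ insert v (p '' Set.Icc a b), ∀ w ∈ insert v (p '' Set.Icc a b), u ≠ w →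
      ∃ t ∈ insert v (p '' Set.Icc a b), t ≠ u ∧ t ≠ w ∧ G.Adj u t := by
  intro u hu w hw huw
  have hmem : ∀ t, a ≤ t → t ≤ b → p t ∈ insert v (p '' Set.Icc a b) := by
    intro t h1 h2; exact Set.mem_insert_of_mem _ ⟨t, ⟨h1, h2⟩, rfl⟩
  rcases hu with rfl | ⟨i, ⟨hai, hib⟩, rfl⟩
  · by_cases hwa : w = p a
    · exact ⟨p b, hmem b (by omega) le_rfl, (hpv b (by omega) le_rfl),
        by rw [hwa]; exact fun hh => hinj a b le_rfl (by omega) le_rfl hh.symm, hvb⟩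
    · exact ⟨p a, hmem a le_rfl (by omega), (hpv a le_rfl (by omega)), fun hh => hwa hh.symm, hva⟩
  · obtain ⟨c1, hc1S, hc1u, hc1adj, c2, hc2S, hc2u, hc2adj, hc12⟩ :
        ∃ c1 ∈ insert v (p '' Set.Icc a b), c1 ≠ p i ∧ G.Adj (p i) c1 ∧
        ∃ c2 ∈ insert v (p '' Set.Icc a b), c2 ≠ p i ∧ G.Adj (p i) c2 ∧ c1 ≠ c2 := by
      rcases Nat.lt_or_ge a i with hai' | hai'
      · rcases Nat.lt_or_ge i b with hib' | hib'
        · refine ⟨p (i-1), hmem _ (by omega) (by omega),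
            fun hh => hinj (i-1) i (by omega) (by omega) (by omega) hh, ?_,
            p (i+1), hmem _ (by omega) (by omega),
            fun hh => hinj i (i+1) (by omega) (by omega) (by omega) hh.symm, ?_,
            fun hh => hinj (i-1) (i+1) (by omega) (by omega) (by omega) hh⟩
          · exact (hadj i (i-1) (by omega) (by omega) (by omega) (by omega)).mpr (by omega)
          · exact (hadj i (i+1) (by omega) (by omega) (by omega) (by omega)).mpr (by omega)
        · have hib0 : i = b := by omega
          subst hib0
          refine ⟨v, Set.mem_insert _ _, fun hh => hpv i (by omega) le_rfl hh.symm, hvb.symm,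
            p (i-1), hmem _ (by omega) (by omega),
            fun hh => hinj (i-1) i (by omega) (by omega) le_rfl hh, ?_,
            fun hh => (hpv (i-1) (by omega) (by omega) hh.symm)⟩
          exact (hadj i (i-1) (by omega) le_rfl (by omega) (by omega)).mpr (by omega)
      · have hia0 : i = a := by omega
        subst hia0
        refine ⟨v, Set.mem_insert _ _, fun hh => hpv i le_rfl (by omega) hh.symm, hva.symm,
          p (i+1), hmem _ (by omega) (by omega),
          fun hh => hinj i (i+1) le_rfl (by omega) (by omega) hh.symm, ?_,
          fun hh => (hpv (i+1) (by omega) (by omega) hh.symm)⟩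
        exact (hadj i (i+1) le_rfl (by omega) (by omega) (by omega)).mpr (by omega)
    by_cases hwc : w = c1
    · exact ⟨c2, hc2S, hc2u, fun hh => (hwc ▸ hc12) hh.symm, hc2adj⟩
    · exact ⟨c1, hc1S, hc1u, fun hh => hwc hh.symm, hc1adj⟩

lemma distinctRow
    (hab : a + 3 ≤ b)
    (hpv : ∀ t, a ≤ t → t ≤ b → p t ≠ v)
    (hinj : ∀ s t, a ≤ s → s < t → t ≤ b → p s ≠ p t)
    (hadj : ∀ s t, a ≤ s → s ≤ b → a ≤ t → t ≤ b → (G.Adj (p s) (p t) ↔ (s + 1 = t ∨ t + 1 = s)))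
    (hva : G.Adj v (p a)) (hvb : G.Adj v (p b)) :
    ∀ u ∈ insert v (p '' Set.Icc a b), ∀ w ∈ insert v (p '' Set.Icc a b), u ≠ w →
      ∃ t ∈ insert v (p '' Set.Icc a b), t ≠ u ∧ t ≠ w ∧
        ((G.Adj u t ∧ ¬ G.Adj w t) ∨ (G.Adj w t ∧ ¬ G.Adj u t)) := by
  have hmem : ∀ t, a ≤ t → t ≤ b → p t ∈ insert v (p '' Set.Icc a b) := by
    intro t h1 h2; exact Set.mem_insert_of_mem _ ⟨t, ⟨h1, h2⟩, rfl⟩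
  have hvp : ∀ j, a ≤ j → j ≤ b → ∃ t ∈ insert v (p '' Set.Icc a b),
      t ≠ v ∧ t ≠ p j ∧ G.Adj v t ∧ ¬ G.Adj (p j) t := by
    intro j haj hjb
    by_cases hcase : j + 2 ≤ b
    · refine ⟨p b, hmem b (by omega) le_rfl, hpv b (by omega) le_rfl, ?_, hvb, ?_⟩
      · exact fun hh => hinj j b haj (by omega) le_rfl hh.symm
      · rw [hadj j b haj hjb (by omega) le_rfl]; omega
    · have haj2 : a + 2 ≤ j := by omega
      refine ⟨p a, hmem a le_rfl (by omega), hpv a le_rfl (by omega), ?_, hva, ?_⟩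
      · exact fun hh => hinj a j le_rfl (by omega) hjb hh
      · rw [hadj j a haj hjb le_rfl (by omega)]; omega
  have hpp : ∀ i j, a ≤ i → i < j → j ≤ b → ∃ t ∈ insert v (p '' Set.Icc a b),
      t ≠ p i ∧ t ≠ p j ∧
      ((G.Adj (p i) t ∧ ¬ G.Adj (p j) t) ∨ (G.Adj (p j) t ∧ ¬ G.Adj (p i) t)) := by
    intro i j hai hij hjb
    rcases Nat.lt_or_ge a i with hai' | hai'
    · refine ⟨p (i-1), hmem _ (by omega) (by omega),
        fun hh => hinj (i-1) i (by omega) (by omega) (by omega) hh,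
        fun hh => hinj (i-1) j (by omega) (by omega) hjb hh, Or.inl ⟨?_, ?_⟩⟩
      · exact (hadj i (i-1) (by omega) (by omega) (by omega) (by omega)).mpr (by omega)
      · rw [hadj j (i-1) (by omega) hjb (by omega) (by omega)]; omega
    · have hia : i = a := by omega
      subst hia
      rcases Nat.lt_or_ge j b with hjb' | hjb'
      · refine ⟨p (j+1), hmem _ (by omega) (by omega),
          fun hh => hinj i (j+1) le_rfl (by omega) (by omega) hh.symm,
          fun hh => hinj j (j+1) (by omega) (by omega) (by omega) hh.symm, Or.inr ⟨?_, ?_⟩⟩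
        · exact (hadj j (j+1) (by omega) (by omega) (by omega) (by omega)).mpr (by omega)
        · rw [hadj i (j+1) le_rfl (by omega) (by omega) (by omega)]; omega
      · have hjb0 : j = b := by omega
        subst hjb0
        refine ⟨p (i+1), hmem _ (by omega) (by omega),
          fun hh => hinj i (i+1) le_rfl (by omega) (by omega) hh.symm,
          fun hh => hinj (i+1) j (by omega) (by omega) le_rfl hh, Or.inl ⟨?_, ?_⟩⟩
        · exact (hadj i (i+1) le_rfl (by omega) (by omega) (by omega)).mpr (by omega)
        · rw [hadj j (i+1) (by omega) le_rfl (by omega) (by omega)]; omega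
  intro u hu w hw huw
  rcases hu with rfl | ⟨i, ⟨hai, hib⟩, rfl⟩
  · rcases hw with rfl | ⟨j, ⟨haj, hjb⟩, rfl⟩
    · exact absurd rfl huw
    · obtain ⟨t, htS, htv, htj, h1, h2⟩ := hvp j haj hjb
      exact ⟨t, htS, htv, htj, Or.inl ⟨h1, h2⟩⟩
  · rcases hw with rfl | ⟨j, ⟨haj, hjb⟩, rfl⟩
    · obtain ⟨t, htS, htv, hti, h1, h2⟩ := hvp i hai hib
      exact ⟨t, htS, hti, htv, Or.inr ⟨h1, h2⟩⟩
    · rcases Nat.lt_trichotomy i j with hij | hij | hij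
      · obtain ⟨t, htS, h1, h2, h3⟩ := hpp i j hai hij hjb
        exact ⟨t, htS, h1, h2, h3⟩
      · exact absurd (hij ▸ rfl) huw
      · obtain ⟨t, htS, h1, h2, h3⟩ := hpp j i haj hij hib
        exact ⟨t, htS, h2, h1, h3.symm⟩

end CombAux

section RankAux

lemma rank_two {m n : Type} [Fintype m] [Fintype n] (M : Matrix m n (ZMod 2))
    (u w : m) (huw : u ≠ w) (hcard : Fintype.card m = 2)
    (h1 : M u ≠ 0) (h2 : M w ≠ 0) (h3 : M u ≠ M w) : M.rank = 2 := by
  have hbij : Function.Bijective ![u, w] := by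
    rw [Fintype.bijective_iff_injective_and_card]
    constructor
    · intro a b hab
      fin_cases a <;> fin_cases b <;> simp_all
    · simpa using hcard.symm
  have hli : LinearIndependent (ZMod 2) (M ∘ (Equiv.ofBijective _ hbij)) := by
    rw [linearIndependent_fin2]
    have he0 : (Equiv.ofBijective _ hbij) 0 = u := rfl
    have he1 : (Equiv.ofBijective _ hbij) 1 = w := rfl
    refine ⟨by exact h2, ?_⟩
    intro c
    have hc : c = 0 ∨ c = 1 := by
      fin_cases c
      · exact Or.inl rfl
      · exact Or.inr rfl
    rcases hc with hc | hc <;> subst hc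
    · change (0 : ZMod 2) • M w ≠ M u
      simp only [Function.comp_apply, he0, he1, zero_smul]
      exact fun hh => h1 hh.symm
    · change (1 : ZMod 2) • M w ≠ M u
      simp only [Function.comp_apply, he0, he1, one_smul]
      exact fun hh => h3 hh.symm
  have := ((linearIndependent_equiv (Equiv.ofBijective _ hbij)).mp hli).rank_matrix
  rw [this, hcard]

lemma cut_contra {V : Type} [Fintype V] (G : SimpleGraph V) (S : Set V)
    (x0 y0 : V) (hx0 : x0 ∈ S) (hy0 : y0 ∈ S) (hxy0 : x0 ≠ y0)
    (hnz : ∀ u ∈ S, ∀ w ∈ S, u ≠ w → ∃ t ∈ S, t ≠ u ∧ t ≠ w ∧ G.Adj u t)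
    (hdr : ∀ u ∈ S, ∀ w ∈ S, u ≠ w → ∃ t ∈ S, t ≠ u ∧ t ≠ w ∧
        ((G.Adj u t ∧ ¬ G.Adj w t) ∨ (G.Adj w t ∧ ¬ G.Adj u t)))
    (hLRW : LinRankwidthLE (G.induce S) 1) : False := by
  obtain ⟨σ, hσ⟩ := hLRW
  have hle := hσ 2
  have hN : 1 < Fintype.card ↥S :=
    Fintype.one_lt_card_iff.mpr ⟨⟨x0, hx0⟩, ⟨y0, hy0⟩, by simp [Subtype.ext_iff, hxy0]⟩
  set u : ↥S := σ.symm ⟨0, by omega⟩ with hu_def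
  set w : ↥S := σ.symm ⟨1, by omega⟩ with hw_def
  have huw : u ≠ w := by
    simp only [hu_def, hw_def, ne_eq, EmbeddingLike.apply_eq_iff_eq, Fin.mk.injEq]
    exact fun hh => by simp [Fin.ext_iff] at hh
  have hu2 : (σ u : ℕ) < 2 := by simp [hu_def]
  have hw2 : (σ w : ℕ) < 2 := by simp [hw_def]
  have hS2 : ∀ z : ↥S, (σ z : ℕ) < 2 → z = u ∨ z = w := by
    intro z hz
    have : σ z = ⟨0, by omega⟩ ∨ σ z = ⟨1, by omega⟩ := by
      rcases (by omega : (σ z : ℕ) = 0 ∨ (σ z : ℕ) = 1) with hh | hh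
      · exact Or.inl (Fin.ext hh)
      · exact Or.inr (Fin.ext hh)
    rcases this with hh | hh
    · exact Or.inl (by rw [hu_def, ← hh, Equiv.symm_apply_apply])
    · exact Or.inr (by rw [hw_def, ← hh, Equiv.symm_apply_apply])
  set S2 : Set ↥S := {z : ↥S | (σ z : ℕ) < 2} with hS2_def
  have hcard2 : Fintype.card ↥S2 = 2 := by
    rw [← Nat.card_eq_fintype_card, Nat.card_eq_two_iff]
    refine ⟨⟨u, hu2⟩, ⟨w, hw2⟩, by simp [Subtype.ext_iff, huw], ?_⟩
    ext z
    simp only [Set.mem_insert_iff, Set.mem_singleton_iff, Set.mem_univ, iff_true]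
    rcases hS2 z.1 z.2 with hh | hh
    · exact Or.inl (Subtype.ext hh)
    · exact Or.inr (Subtype.ext hh)
  set M : Matrix ↥S2 ↥(S2ᶜ) (ZMod 2) :=
    Matrix.of fun (i : ↥S2) (j : ↥(S2ᶜ)) =>
      if (G.induce S).Adj i.1 j.1 then (1 : ZMod 2) else 0 with hM_def
  have lift : ∀ t : V, t ∈ S → t ≠ u.1 → t ≠ w.1 → ∃ j : ↥(S2ᶜ), (j.1 : ↥S).1 = t := by
    intro t htS htu htw
    have : (⟨t, htS⟩ : ↥S) ∉ S2 := by
      intro hmem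
      rcases hS2 _ hmem with hh | hh
      · exact htu (congrArg Subtype.val hh)
      · exact htw (congrArg Subtype.val hh)
    exact ⟨⟨⟨t, htS⟩, this⟩, rfl⟩
  have hu1S : u.1 ∈ S := u.2
  have hw1S : w.1 ∈ S := w.2
  have huw1 : u.1 ≠ w.1 := fun hh => huw (Subtype.ext hh)
  have hrow_ne : ∀ (z : ↥S2) (t : ↥(S2ᶜ)) (tv : V), ((t.1 : ↥S).1 = tv) →
      G.Adj (z.1 : ↥S).1 tv → M z ≠ 0 := by
    intro z t tv htv hadj h0
    subst htv
    have h4 := congrFun h0 t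
    rw [hM_def] at h4
    simp only [Matrix.of_apply, Pi.zero_apply] at h4
    split_ifs at h4 with hcond
    · exact one_ne_zero h4
    · exact hcond hadj
  obtain ⟨t1, ht1S, ht1u, ht1w, ht1adj⟩ := hnz u.1 hu1S w.1 hw1S huw1
  obtain ⟨j1, hj1⟩ := lift t1 ht1S ht1u ht1w
  obtain ⟨t2, ht2S, ht2u, ht2w, ht2adj⟩ := hnz w.1 hw1S u.1 hu1S huw1.symm
  obtain ⟨j2, hj2⟩ := lift t2 ht2S ht2w ht2u
  obtain ⟨t3, ht3S, ht3u, ht3w, ht3or⟩ := hdr u.1 hu1S w.1 hw1S huw1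
  obtain ⟨j3, hj3⟩ := lift t3 ht3S ht3u ht3w
  have h1 : M ⟨u, hu2⟩ ≠ 0 := hrow_ne ⟨u, hu2⟩ j1 t1 hj1 ht1adj
  have h2 : M ⟨w, hw2⟩ ≠ 0 := hrow_ne ⟨w, hw2⟩ j2 t2 hj2 ht2adj
  have h3 : M ⟨u, hu2⟩ ≠ M ⟨w, hw2⟩ := by
    intro heq
    have h4 := congrFun heq j3
    rw [hM_def] at h4
    simp only [Matrix.of_apply] at h4
    have hcu : ((G.induce S).Adj (⟨u, hu2⟩ : ↥S2).1 j3.1) ↔ G.Adj u.1 t3 := by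
      rw [← hj3]; exact Iff.rfl
    have hcw : ((G.induce S).Adj (⟨w, hw2⟩ : ↥S2).1 j3.1) ↔ G.Adj w.1 t3 := by
      rw [← hj3]; exact Iff.rfl
    rcases ht3or with ⟨ha1, ha2⟩ | ⟨ha1, ha2⟩
    · rw [if_pos (hcu.mpr ha1), if_neg (fun hc => ha2 (hcw.mp hc))] at h4
      exact one_ne_zero h4
    · rw [if_neg (fun hc => ha2 (hcu.mp hc)), if_pos (hcw.mpr ha1)] at h4
      exact one_ne_zero h4.symm
  have hrk := rank_two M ⟨u, hu2⟩ ⟨w, hw2⟩ (by simp [Subtype.ext_iff, huw]) hcard2 h1 h2 h3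
  rw [hM_def] at hrk
  have hrank2 : cutRank (G.induce S) S2 = 2 := by
    unfold cutRank
    convert hrk using 2
    ext i j
    simp only [Matrix.of_apply]
    congr 1
  omega

end RankAux

section NecklaceAux
open SimpleGraph

lemma necklace_dist {V' : Type} (G' : SimpleGraph V') (h : ℕ) (cv : Fin h → V')
    (B : Fin h → Finset V') (hdec : IsNecklaceDecomp G' h cv B) :
    ∀ z1 z2 : V', G'.dist z1 z2 ≤ h / 2 + 2 := by
  obtain ⟨hh3, hcvinj, hblocks, hmerge, hcover, hedge⟩ := hdec
  have hcv : ∀ i : Fin h, G'.Adj (cv i) (cv (cycSucc i)) := by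
    intro i
    obtain ⟨hcard, hxB, hyB, σ, lL, lR, htot, hσx, hRx, hnLx, hσy, hLy, hnRy, hadj⟩ := hblocks i
    have h0 : (σ ⟨cv i, hxB⟩ : ℕ) = 0 := hσx hxB
    have h1 : (σ ⟨cv (cycSucc i), hyB⟩ : ℕ) = (B i).card - 1 := hσy hyB
    exact (hadj ⟨cv i, hxB⟩ ⟨cv (cycSucc i), hyB⟩ (by omega)).mpr ⟨hRx, hLy⟩
  have hnear : ∀ z : V', ∃ i : Fin h, z = cv i ∨ G'.Adj (cv i) z := by
    intro z
    obtain ⟨i, hzB⟩ := hcover z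
    obtain ⟨hcard, hxB, hyB, σ, lL, lR, htot, hσx, hRx, hnLx, hσy, hLy, hnRy, hadj⟩ := hblocks i
    by_cases hz1 : z = cv i
    · exact ⟨i, Or.inl hz1⟩
    by_cases hz2 : z = cv (cycSucc i)
    · exact ⟨cycSucc i, Or.inl hz2⟩
    have hσz0 : (σ ⟨z, hzB⟩ : ℕ) ≠ 0 := by
      intro hh
      have : σ ⟨z, hzB⟩ = σ ⟨cv i, hxB⟩ := Fin.ext (by rw [hh, hσx hxB])
      exact hz1 (congrArg Subtype.val (σ.injective this))
    have hσz1 : (σ ⟨z, hzB⟩ : ℕ) ≠ (B i).card - 1 := by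
      intro hh
      have : σ ⟨z, hzB⟩ = σ ⟨cv (cycSucc i), hyB⟩ := Fin.ext (by rw [hh, hσy hyB])
      exact hz2 (congrArg Subtype.val (σ.injective this))
    have hlt : (σ ⟨z, hzB⟩ : ℕ) < (B i).card := (σ ⟨z, hzB⟩).isLt
    rcases htot ⟨z, hzB⟩ with hL | hR
    · exact ⟨i, Or.inr ((hadj ⟨cv i, hxB⟩ ⟨z, hzB⟩ (by rw [hσx hxB]; omega)).mpr ⟨hRx, hL⟩)⟩
    · exact ⟨cycSucc i, Or.inr
        ((hadj ⟨z, hzB⟩ ⟨cv (cycSucc i), hyB⟩ (by rw [hσy hyB]; omega)).mpr ⟨hR, hLy⟩).symm⟩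
  have hit : ∀ (m : ℕ) (i : Fin h), (cycSucc^[m] i).1 = (i.1 + m) % h := by
    intro m
    induction m with
    | zero => intro i; simp [Nat.mod_eq_of_lt i.isLt]
    | succ m ih =>
      intro i
      rw [Function.iterate_succ_apply']
      show ((cycSucc^[m] i).1 + 1) % h = _
      rw [ih i]
      conv_rhs => rw [show i.1 + (m + 1) = (i.1 + m) + 1 by ring, Nat.add_mod (i.1 + m) 1 h,
        Nat.mod_eq_of_lt (show 1 < h by omega)]
  have hwalkm : ∀ (m : ℕ) (i : Fin h), ∃ P : G'.Walk (cv i) (cv (cycSucc^[m] i)), P.length = m := by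
    intro m
    induction m with
    | zero =>
      intro i
      exact ⟨Walk.nil.copy rfl (by rw [Function.iterate_zero_apply]), by simp⟩
    | succ m ih =>
      intro i
      obtain ⟨P, hP⟩ := ih i
      exact ⟨(P.concat (hcv _)).copy rfl (by rw [Function.iterate_succ_apply']),
        by rw [Walk.length_copy, Walk.length_concat, hP]⟩
  have hcycwalk : ∀ i j : Fin h, ∃ P : G'.Walk (cv i) (cv j), P.length ≤ h / 2 := by
    have key : ∀ i j : Fin h, ∀ m : ℕ, (i.1 + m) % h = j.1 →
        ∃ P : G'.Walk (cv i) (cv j), P.length = m := by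
      intro i j m hm
      obtain ⟨P, hP⟩ := hwalkm m i
      have : cycSucc^[m] i = j := Fin.ext (by rw [hit m i]; exact hm)
      exact ⟨P.copy rfl (by rw [this]), by simpa using hP⟩
    intro i j
    rcases Nat.le_total i.1 j.1 with hij | hij
    · by_cases hδ : j.1 - i.1 ≤ h / 2
      · obtain ⟨P, hP⟩ := key i j (j.1 - i.1) (by
          have e1 : i.1 + (j.1 - i.1) = j.1 := by omega
          rw [e1]
          exact Nat.mod_eq_of_lt j.isLt)
        exact ⟨P, by omega⟩
      · obtain ⟨P, hP⟩ := key j i (h - (j.1 - i.1)) (by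
          have e1 : j.1 + (h - (j.1 - i.1)) = i.1 + h := by omega
          rw [e1, Nat.add_mod_right]
          exact Nat.mod_eq_of_lt i.isLt)
        refine ⟨P.reverse, ?_⟩
        rw [Walk.length_reverse]
        omega
    · by_cases hδ : i.1 - j.1 ≤ h / 2
      · obtain ⟨P, hP⟩ := key j i (i.1 - j.1) (by
          have e1 : j.1 + (i.1 - j.1) = i.1 := by omega
          rw [e1]
          exact Nat.mod_eq_of_lt i.isLt)
        refine ⟨P.reverse, ?_⟩
        rw [Walk.length_reverse]
        omega
      · obtain ⟨P, hP⟩ := key i j (h - (i.1 - j.1)) (by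
          have e1 : i.1 + (h - (i.1 - j.1)) = j.1 + h := by omega
          rw [e1, Nat.add_mod_right]
          exact Nat.mod_eq_of_lt j.isLt)
        exact ⟨P, by omega⟩
  have hout : ∀ z : V', ∃ (i : Fin h) (P : G'.Walk z (cv i)), P.length ≤ 1 := by
    intro z
    obtain ⟨i, hz | hz⟩ := hnear z
    · exact ⟨i, Walk.nil.copy hz.symm rfl, by simp⟩
    · exact ⟨i, Walk.cons hz.symm Walk.nil, by simp⟩
  intro z1 z2
  obtain ⟨i, P1, hP1⟩ := hout z1
  obtain ⟨j, P2, hP2⟩ := hout z2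
  obtain ⟨Pm, hPm⟩ := hcycwalk i j
  have := SimpleGraph.dist_le (P1.append (Pm.append P2.reverse))
  simp only [Walk.length_append, Walk.length_reverse] at this
  omega

end NecklaceAux

/-- let `G` be connected, Ω_N-free (every induced subgraph on at most 8
vertices has linear rankwidth at most 1), and not a thread graph; let `C = c 0 … c (h-1)`
be a shortest induced cycle of length at least 9 in `G`, and let `v` be a vertex off `C`
such that `G − v` is a necklace graph with underlying cycle `C`. Then every two neighbors
of `v` are at distance at most 2 in `G − v`. -/
theorem stmt19 {V : Type} [Fintype V] (G : SimpleGraph V) (hconn : G.Connected)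
    (hfree : ∀ s : Set V, s.ncard ≤ 8 → LinRankwidthLE (G.induce s) 1)
    (hnotthread : ¬ IsThreadGraph G)
    (h : ℕ) (hh : 9 ≤ h) (c : Fin h → V) (hinj : Function.Injective c)
    (hcyc : ∀ a b : Fin h, G.Adj (c a) (c b) ↔ (cycSucc a = b ∨ cycSucc b = a))
    (hshort : ∀ (h' : ℕ) (c' : Fin h' → V), 9 ≤ h' → Function.Injective c' →
      (∀ a b : Fin h', G.Adj (c' a) (c' b) ↔ (cycSucc a = b ∨ cycSucc b = a)) → h ≤ h')
    (v : V) (hv : ∀ i, c i ≠ v)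
    (hneck : ∃ B : Fin h → Finset ↥{x : V | x ≠ v},
      IsNecklaceDecomp (G.induce {x : V | x ≠ v}) h (fun i => ⟨c i, hv i⟩) B) :
    ∀ x y : ↥{x : V | x ≠ v}, G.Adj v x.1 → G.Adj v y.1 →
      (G.induce {x : V | x ≠ v}).dist x y ≤ 2 := by
  intro x y hx hy
  by_contra hd2
  push_neg at hd2
  have hd3 : 3 ≤ (G.induce {x : V | x ≠ v}).dist x y := hd2
  obtain ⟨B, hdec⟩ := hneck
  have hdxy : (G.induce {x : V | x ≠ v}).dist x y ≤ h / 2 + 2 :=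
    necklace_dist _ h _ B hdec x y
  obtain ⟨W, hW⟩ := SimpleGraph.exists_walk_of_dist_ne_zero
    (by omega : (G.induce {x : V | x ≠ v}).dist x y ≠ 0)
  set d := (G.induce {x : V | x ≠ v}).dist x y with hd_def
  set p : ℕ → V := fun t => (W.getVert t).1 with hp_def
  have hpmem : ∀ t, p t ≠ v := fun t => (W.getVert t).2
  have hlen : W.length = d := hW
  have hQadj : ∀ s t, s ≤ d → t ≤ d →
      (G.Adj (p s) (p t) ↔ (s + 1 = t ∨ t + 1 = s)) := by
    intro s t hs ht
    constructor
    · intro hadj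
      by_contra hcon
      push_neg at hcon
      obtain ⟨h1, h2⟩ := hcon
      rcases Nat.lt_trichotomy s t with hst | hst | hst
      · have hQ : (G.induce {x : V | x ≠ v}).Adj (W.getVert s) (W.getVert t) := hadj
        have := dist_getVert_lower W hW (le_of_lt hst) (by omega) (SimpleGraph.Walk.cons hQ SimpleGraph.Walk.nil)
        simp only [SimpleGraph.Walk.length_cons, SimpleGraph.Walk.length_nil] at this
        omega
      · subst hst
        exact (G.irrefl hadj)
      · have hQ : (G.induce {x : V | x ≠ v}).Adj (W.getVert t) (W.getVert s) := hadj.symm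
        have := dist_getVert_lower W hW (le_of_lt hst) (by omega) (SimpleGraph.Walk.cons hQ SimpleGraph.Walk.nil)
        simp only [SimpleGraph.Walk.length_cons, SimpleGraph.Walk.length_nil] at this
        omega
    · intro hc
      rcases hc with hc | hc
      · subst hc
        exact (W.adj_getVert_succ (by omega))
      · subst hc
        exact (W.adj_getVert_succ (by omega)).symm
  have hQinj : ∀ s t, s < t → t ≤ d → p s ≠ p t := by
    intro s t hst ht heq
    have heq' : W.getVert s = W.getVert t := Subtype.ext heq
    have := dist_getVert_lower W hW (le_of_lt hst) (by omega)
      (SimpleGraph.Walk.nil.copy rfl heq')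
    simp only [SimpleGraph.Walk.length_copy, SimpleGraph.Walk.length_nil] at this
    omega
  have hp0 : p 0 = x.1 := congrArg Subtype.val (W.getVert_zero)
  have hpd : p d = y.1 := by
    have hgl : W.getVert W.length = y := W.getVert_length
    rw [hlen] at hgl
    exact congrArg Subtype.val hgl
  have hex : ∃ k, 3 ≤ k ∧ ∃ a b2, b2 ≤ d ∧ a + k = b2 ∧ G.Adj v (p a) ∧ G.Adj v (p b2) :=
    ⟨d, hd3, 0, d, le_rfl, by omega, by rw [hp0]; exact hx, by rw [hpd]; exact hy⟩
  set k0 := Nat.find hex with hk0_def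
  obtain ⟨hk03, a, b, hbd, hab, hPva, hPvb⟩ := Nat.find_spec hex
  have hk0min : ∀ m, m < k0 →
      ¬(3 ≤ m ∧ ∃ a2 b2, b2 ≤ d ∧ a2 + m = b2 ∧ G.Adj v (p a2) ∧ G.Adj v (p b2)) :=
    fun m hm => Nat.find_min hex hm
  have hk0d : k0 ≤ d := by omega
  have hab3 : a + 3 ≤ b := by omega
  by_cases hk7 : 7 ≤ k0
  · -- long induced cycle through v: contradicts minimality of C
    have hinterior : ∀ t, a < t → t < b → ¬ G.Adj v (p t) := by
      intro t h1 h2 hPt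
      rcases Nat.lt_or_ge (t - a) 3 with hta | hta
      · exact hk0min (b - t) (by omega) ⟨by omega, t, b, hbd, by omega, hPt, hPvb⟩
      · exact hk0min (t - a) (by omega) ⟨hta, a, t, by omega, by omega, hPva, hPt⟩
    set ℓ := k0 + 2 with hl_def
    set c' : Fin ℓ → V := fun α => if α.1 = 0 then v else p (a + α.1 - 1) with hc'_def
    have hc'0 : ∀ α : Fin ℓ, α.1 = 0 → c' α = v := by
      intro α hα; exact if_pos hα
    have hc's : ∀ α : Fin ℓ, α.1 ≠ 0 → c' α = p (a + α.1 - 1) := by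
      intro α hα; exact if_neg hα
    have hidx : ∀ α : Fin ℓ, α.1 ≠ 0 → a ≤ a + α.1 - 1 ∧ a + α.1 - 1 ≤ b := by
      intro α hα
      have := α.isLt
      omega
    have hinjc : Function.Injective c' := by
      intro α β heq
      by_cases hα : α.1 = 0 <;> by_cases hβ : β.1 = 0
      · exact Fin.ext (by omega)
      · rw [hc'0 α hα, hc's β hβ] at heq
        exact absurd heq.symm (hpmem _)
      · rw [hc's α hα, hc'0 β hβ] at heq
        exact absurd heq (hpmem _)
      · rw [hc's α hα, hc's β hβ] at heq
        have hiα := hidx α hα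
        have hiβ := hidx β hβ
        rcases Nat.lt_trichotomy (a + α.1 - 1) (a + β.1 - 1) with hcc | hcc | hcc
        · exact absurd heq (hQinj _ _ hcc (by omega))
        · have hα1 := α.isLt
          have hβ1 := β.isLt
          exact Fin.ext (by omega)
        · exact absurd heq.symm (hQinj _ _ hcc (by omega))
    have hvalc : ∀ γ δ : Fin ℓ, cycSucc γ = δ ↔
        ((γ.1 + 1 = ℓ ∧ δ.1 = 0) ∨ (γ.1 + 1 < ℓ ∧ δ.1 = γ.1 + 1)) := by
      intro γ δ
      rw [Fin.ext_iff]
      show (γ.1 + 1) % ℓ = δ.1 ↔ _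
      have hγ := γ.isLt
      rcases Nat.lt_or_ge (γ.1 + 1) ℓ with hlt | hge
      · rw [Nat.mod_eq_of_lt hlt]; omega
      · have he : γ.1 + 1 = ℓ := by omega
        rw [he, Nat.mod_self]; omega
    have hcase0 : ∀ β : Fin ℓ, β.1 ≠ 0 →
        (G.Adj v (p (a + β.1 - 1)) ↔ (β.1 = 1 ∨ β.1 = k0 + 1)) := by
      intro β hβ
      have hiβ := hidx β hβ
      have hβlt := β.isLt
      constructor
      · intro hadj
        by_contra hcon
        push_neg at hcon
        exact hinterior (a + β.1 - 1) (by omega) (by omega) hadj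
      · intro hc
        rcases hc with hc | hc
        · rw [show a + β.1 - 1 = a by omega]; exact hPva
        · rw [show a + β.1 - 1 = b by omega]; exact hPvb
    have hcyc' : ∀ α β : Fin ℓ, G.Adj (c' α) (c' β) ↔ (cycSucc α = β ∨ cycSucc β = α) := by
      intro α β
      rw [hvalc α β, hvalc β α]
      have hαlt := α.isLt
      have hβlt := β.isLt
      by_cases hα : α.1 = 0 <;> by_cases hβ : β.1 = 0
      · rw [hc'0 α hα, hc'0 β hβ]
        constructor
        · intro hadj
          exact absurd hadj (G.irrefl)
        · intro hor
          exact absurd hor (by omega)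
      · rw [hc'0 α hα, hc's β hβ, hcase0 β hβ]
        omega
      · rw [hc's α hα, hc'0 β hβ, SimpleGraph.adj_comm, hcase0 α hα]
        omega
      · rw [hc's α hα, hc's β hβ]
        have hiα := hidx α hα
        have hiβ := hidx β hβ
        rw [hQadj _ _ (by omega) (by omega)]
        omega
    have hhl := hshort ℓ c' (by omega) hinjc hcyc'
    omega
  · -- short gap: a small obstruction, contradicting Ω_N-freeness
    push_neg at hk7
    have hcard : (insert v (p '' Set.Icc a b)).ncard ≤ 8 := by
      have h1 : (p '' Set.Icc a b).ncard ≤ (Set.Icc a b).ncard :=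
        Set.ncard_image_le (Set.finite_Icc a b)
      have h2 : (Set.Icc a b).ncard = b + 1 - a := by
        rw [← Finset.coe_Icc, Set.ncard_coe_finset, Nat.card_Icc]
      have h3 := Set.ncard_insert_le v (p '' Set.Icc a b)
      omega
    refine cut_contra G (insert v (p '' Set.Icc a b)) v (p a) (Set.mem_insert _ _)
      (Set.mem_insert_of_mem _ ⟨a, ⟨le_rfl, by omega⟩, rfl⟩)
      (Ne.symm (hpmem a)) ?_ ?_ (hfree _ hcard)
    · exact nonzeroRow G v p a b hab3 (fun t _ _ => hpmem t)
        (fun s t h1 h2 h3 => hQinj s t h2 (by omega))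
        (fun s t h1 h2 h3 h4 => hQadj s t (by omega) (by omega)) hPva hPvb
    · exact distinctRow G v p a b hab3 (fun t _ _ => hpmem t)
        (fun s t h1 h2 h3 => hQinj s t h2 (by omega))
        (fun s t h1 h2 h3 h4 => hQadj s t (by omega) (by omega)) hPva hPvb


end LRW1
end
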